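/- arXiv:2410.13555 — 3 statements merged into one kernel-verified Lean document; each statement's English description precedes it below -/
import Mathlib

section
/- For each non-negative integer N: if N is even then rT(1,1,1;N) = Rt(2,2,2;N), and if N is odd then rT(1,1,1;N) = 4·T(2,4,4;N−1). -/
/-- The `n`-th triangular number `n(n+1)/2`. -/
def tri (n : ℕ) : ℕ := n * (n + 1) / 2

/-- The `n`-th generalized pentagonal number `n(3n+1)/2` (`n ∈ ℤ`). -/
def pent (n : ℤ) : ℤ := n * (3 * n + 1) / 2

/-- The `n`-th generalized octagonal number `n(3n+2)` (`n ∈ ℤ`). -/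
def oct (n : ℤ) : ℤ := n * (3 * n + 2)
noncomputable def rCount (a b c : ℕ) (N : ℤ) : ℕ :=
  {x : ℤ × ℤ × ℤ | N = a * x.1 ^ 2 + b * x.2.1 ^ 2 + c * x.2.2 ^ 2}.ncard

noncomputable def TCount (a b c : ℕ) (N : ℤ) : ℕ :=
  {x : ℕ × ℕ × ℕ | N = a * tri x.1 + b * tri x.2.1 + c * tri x.2.2}.ncard

noncomputable def rTCount (a b c : ℕ) (N : ℤ) : ℕ :=
  {x : ℤ × ℕ × ℕ | N = a * x.1 ^ 2 + b * tri x.2.1 + c * tri x.2.2}.ncard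

noncomputable def RtCount (a b c : ℕ) (N : ℤ) : ℕ :=
  {x : ℤ × ℤ × ℕ | N = a * x.1 ^ 2 + b * x.2.1 ^ 2 + c * tri x.2.2}.ncard

noncomputable def GCount (a b c : ℕ) (N : ℤ) : ℕ :=
  {x : ℤ × ℤ × ℤ | N = a * oct x.1 + b * oct x.2.1 + c * oct x.2.2}.ncard

noncomputable def RgCount (a b c : ℕ) (N : ℤ) : ℕ :=
  {x : ℤ × ℤ × ℤ | N = a * x.1 ^ 2 + b * x.2.1 ^ 2 + c * oct x.2.2}.ncard

noncomputable def RpCount (a b c : ℕ) (N : ℤ) : ℕ :=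
  {x : ℤ × ℤ × ℤ | N = a * x.1 ^ 2 + b * x.2.1 ^ 2 + c * pent x.2.2}.ncard

noncomputable def rPCount (a b c : ℕ) (N : ℤ) : ℕ :=
  {x : ℤ × ℤ × ℤ | N = a * x.1 ^ 2 + b * pent x.2.1 + c * pent x.2.2}.ncard

noncomputable def rGCount (a b c : ℕ) (N : ℤ) : ℕ :=
  {x : ℤ × ℤ × ℤ | N = a * x.1 ^ 2 + b * oct x.2.1 + c * oct x.2.2}.ncard

noncomputable def pGCount (a b c : ℕ) (N : ℤ) : ℕ :=
  {x : ℤ × ℤ × ℤ | N = a * pent x.1 + b * oct x.2.1 + c * oct x.2.2}.ncard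

noncomputable def TpCount (a b c : ℕ) (N : ℤ) : ℕ :=
  {x : ℕ × ℕ × ℤ | N = a * tri x.1 + b * tri x.2.1 + c * pent x.2.2}.ncard

noncomputable def TgCount (a b c : ℕ) (N : ℤ) : ℕ :=
  {x : ℕ × ℕ × ℤ | N = a * tri x.1 + b * tri x.2.1 + c * oct x.2.2}.ncard

noncomputable def tGCount (a b c : ℕ) (N : ℤ) : ℕ :=
  {x : ℕ × ℤ × ℤ | N = a * tri x.1 + b * oct x.2.1 + c * oct x.2.2}.ncard

noncomputable def rtpCount (a b c : ℕ) (N : ℤ) : ℕ :=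
  {x : ℤ × ℕ × ℤ | N = a * x.1 ^ 2 + b * tri x.2.1 + c * pent x.2.2}.ncard

noncomputable def rtgCount (a b c : ℕ) (N : ℤ) : ℕ :=
  {x : ℤ × ℕ × ℤ | N = a * x.1 ^ 2 + b * tri x.2.1 + c * oct x.2.2}.ncard

noncomputable def tpgCount (a b c : ℕ) (N : ℤ) : ℕ :=
  {x : ℕ × ℤ × ℤ | N = a * tri x.1 + b * pent x.2.1 + c * oct x.2.2}.ncard

def myQ (a b c K : ℤ) : Set (ℤ × ℤ × ℤ) := {x | K = a * x.1^2 + b * x.2.1^2 + c * x.2.2^2}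

lemma ncard_bijOn {α β : Type*} {S : Set α} {T : Set β} (f : α → β) (h : Set.BijOn f S T) :
    S.ncard = T.ncard := by
  rw [← Nat.card_coe_set_eq, ← Nat.card_coe_set_eq]
  exact Nat.card_congr (h.equiv f)

lemma ncard_double {α : Type*} {A S : Set α} (f : α → α) (hfin : S.Finite)
    (hsub : A ⊆ S) (hbij : Set.BijOn f A (S \ A)) : S.ncard = 2 * A.ncard := by
  have h1 := Set.ncard_diff_add_ncard_of_subset hsub hfin
  have h2 := ncard_bijOn f hbij
  omega

lemma myQ_finite {a b c : ℤ} (K : ℤ) (ha : 1 ≤ a) (hb : 1 ≤ b) (hc : 1 ≤ c) :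
    (myQ a b c K).Finite := by
  apply Set.Finite.subset (Set.finite_Icc ((-K, -K, -K) : ℤ × ℤ × ℤ) (K, K, K))
  rintro ⟨x, y, z⟩ h
  simp only [myQ, Set.mem_setOf_eq] at h
  have hx := sq_nonneg x; have hy := sq_nonneg y; have hz := sq_nonneg z
  have h1 : x^2 ≤ K := by nlinarith
  have h2 : y^2 ≤ K := by nlinarith
  have h3 : z^2 ≤ K := by nlinarith
  have e1 : x ≤ x^2 := by nlinarith [sq_nonneg (x-1)]
  have e2 : y ≤ y^2 := by nlinarith [sq_nonneg (y-1)]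
  have e3 : z ≤ z^2 := by nlinarith [sq_nonneg (z-1)]
  have f1 : -x ≤ x^2 := by nlinarith [sq_nonneg (x+1)]
  have f2 : -y ≤ y^2 := by nlinarith [sq_nonneg (y+1)]
  have f3 : -z ≤ z^2 := by nlinarith [sq_nonneg (z+1)]
  simp only [Set.mem_Icc, Prod.mk_le_mk]
  refine ⟨⟨by linarith, by linarith, by linarith⟩, by linarith, by linarith, by linarith⟩

lemma sq_mod (z : ℤ) : ∃ A, z^2 = A ∧ ((z % 2 = 0 ∧ A % 4 = 0) ∨ (z % 2 = 1 ∧ A % 8 = 1)) := by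
  rcases Int.even_or_odd z with ⟨m, rfl⟩ | ⟨m, rfl⟩
  · exact ⟨4*m^2, by ring, Or.inl ⟨by omega, Int.mul_emod_right 4 (m^2)⟩⟩
  · obtain ⟨j, hj⟩ := Int.even_mul_succ_self m
    exact ⟨8*j+1, by linear_combination 4*hj, Or.inr ⟨by omega, by omega⟩⟩

lemma tri_cast (m : ℕ) : (tri m : ℤ) * 2 = m * (m + 1) := by
  have : tri m * 2 = m * (m + 1) := Nat.div_mul_cancel (Nat.even_mul_succ_self m).two_dvd
  exact_mod_cast congrArg (Nat.cast : ℕ → ℤ) this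

lemma odd811 {K l s t : ℤ} (hK : K % 2 = 1) (h : 2*K = 8*l^2 + s^2 + t^2) :
    s % 2 = 1 ∧ t % 2 = 1 := by
  obtain ⟨A, hA, pA⟩ := sq_mod l; obtain ⟨B, hB, pB⟩ := sq_mod s; obtain ⟨C, hC, pC⟩ := sq_mod t
  rw [hA, hB, hC] at h; omega

lemma odd411 {K l u v : ℤ} (hK : K % 2 = 1) (h : K = 4*l^2 + u^2 + v^2) :
    u % 2 + v % 2 = 1 := by
  obtain ⟨A, hA, pA⟩ := sq_mod l; obtain ⟨B, hB, pB⟩ := sq_mod u; obtain ⟨C, hC, pC⟩ := sq_mod v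
  rw [hA, hB, hC] at h; omega

lemma odd441 {K x y z : ℤ} (hK : K % 2 = 1) (h : K = 4*x^2 + 4*y^2 + z^2) :
    z % 2 = 1 := by
  obtain ⟨A, hA, pA⟩ := sq_mod x; obtain ⟨B, hB, pB⟩ := sq_mod y; obtain ⟨C, hC, pC⟩ := sq_mod z
  rw [hA, hB, hC] at h; omega

lemma par441 {K x y z : ℤ} (hK : K % 8 = 1) (h : K = 4*x^2 + 4*y^2 + z^2) :
    (x + y) % 2 = 0 := by
  obtain ⟨A, hA, pA⟩ := sq_mod x; obtain ⟨B, hB, pB⟩ := sq_mod y; obtain ⟨C, hC, pC⟩ := sq_mod z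
  rw [hA, hB, hC] at h; omega

lemma odd881 {K a b w : ℤ} (hK : K % 2 = 1) (h : K = 8*a^2 + 8*b^2 + w^2) :
    w % 2 = 1 := by
  obtain ⟨A, hA, pA⟩ := sq_mod a; obtain ⟨B, hB, pB⟩ := sq_mod b; obtain ⟨C, hC, pC⟩ := sq_mod w
  rw [hA, hB, hC] at h; omega

lemma odd122 {K a b g : ℤ} (hK : K % 8 = 5) (h : K = a^2 + 2*b^2 + 2*g^2) :
    a % 2 = 1 ∧ b % 2 = 1 ∧ g % 2 = 1 := by
  obtain ⟨A, hA, pA⟩ := sq_mod a; obtain ⟨B, hB, pB⟩ := sq_mod b; obtain ⟨C, hC, pC⟩ := sq_mod g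
  rw [hA, hB, hC] at h; omega

lemma L1 (N : ℕ) : 4 * rTCount 1 1 1 (N : ℤ) = (myQ 4 1 1 (4*N+1)).ncard := by
  have hK2 : (4*(N:ℤ)+1) % 2 = 1 := by omega
  -- step a
  have ha : rTCount 1 1 1 (N : ℤ) =
      (myQ 8 1 1 (8*N+2) ∩ {x | 0 < x.2.1 ∧ 0 < x.2.2}).ncard := by
    unfold rTCount
    apply ncard_bijOn (fun x : ℤ × ℕ × ℕ => (x.1, 2*(x.2.1:ℤ)+1, 2*(x.2.2:ℤ)+1))
    refine ⟨?_, ?_, ?_⟩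
    · rintro ⟨l, m, n⟩ hx
      simp only [Set.mem_setOf_eq] at hx
      push_cast at hx
      simp only [myQ, Set.mem_inter_iff, Set.mem_setOf_eq]
      refine ⟨?_, by omega, by omega⟩
      linear_combination 8*hx + 4*(tri_cast m) + 4*(tri_cast n)
    · rintro ⟨l, m, n⟩ _ ⟨l', m', n'⟩ _ h
      simp only [Prod.mk.injEq] at h ⊢
      omega
    · rintro ⟨l, s, t⟩ hx
      simp only [myQ, Set.mem_inter_iff, Set.mem_setOf_eq] at hx
      obtain ⟨hq, hs, ht⟩ := hx
      have h2 : 2*(4*(N:ℤ)+1) = 8*l^2 + s^2 + t^2 := by linarith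
      obtain ⟨hso, hto⟩ := odd811 hK2 h2
      obtain ⟨m', hm'⟩ : ∃ m' : ℕ, s = 2*(m':ℤ)+1 := ⟨((s-1)/2).toNat, by omega⟩
      obtain ⟨n', hn'⟩ : ∃ n' : ℕ, t = 2*(n':ℤ)+1 := ⟨((t-1)/2).toNat, by omega⟩
      subst hm'; subst hn'
      refine ⟨(l, m', n'), ?_, rfl⟩
      simp only [Set.mem_setOf_eq]
      have h8 : 8*(N:ℤ) = 8*(l^2 + (tri m' : ℤ) + (tri n' : ℤ)) := by
        linear_combination h2 - 4*(tri_cast m') - 4*(tri_cast n')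
      push_cast
      linarith
  -- step b : drop positivity of t
  have hb : (myQ 8 1 1 (8*N+2) ∩ {x | 0 < x.2.1}).ncard =
      2 * (myQ 8 1 1 (8*N+2) ∩ {x | 0 < x.2.1 ∧ 0 < x.2.2}).ncard := by
    apply ncard_double (fun x : ℤ × ℤ × ℤ => (x.1, x.2.1, -x.2.2))
    · exact (myQ_finite _ (by norm_num) (by norm_num) (by norm_num)).subset Set.inter_subset_left
    · exact fun x hx => ⟨hx.1, hx.2.1⟩
    · refine ⟨?_, ?_, ?_⟩
      · rintro ⟨l, s, t⟩ hx
        simp only [myQ, Set.mem_inter_iff, Set.mem_diff, Set.mem_setOf_eq] at hx ⊢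
        obtain ⟨hq, hs, ht⟩ := hx
        refine ⟨⟨by linear_combination hq, hs⟩, ?_⟩
        rintro ⟨-, -, h⟩
        omega
      · rintro ⟨l, s, t⟩ _ ⟨l', s', t'⟩ _ h
        simp only [Prod.mk.injEq] at h ⊢
        omega
      · rintro ⟨l, s, t⟩ hx
        simp only [myQ, Set.mem_inter_iff, Set.mem_diff, Set.mem_setOf_eq, not_and, not_lt] at hx
        obtain ⟨⟨hq, hs⟩, hnot⟩ := hx
        have ht0 : t ≤ 0 := hnot (by linear_combination hq) hs
        have h2 : 2*(4*(N:ℤ)+1) = 8*l^2 + s^2 + t^2 := by linarith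
        obtain ⟨-, hto⟩ := odd811 hK2 h2
        refine ⟨(l, s, -t), ?_, ?_⟩
        · simp only [myQ, Set.mem_inter_iff, Set.mem_setOf_eq]
          exact ⟨by linear_combination hq, hs, by omega⟩
        · simp only [Prod.mk.injEq, neg_neg]
  -- step c : drop positivity of s
  have hc : (myQ 8 1 1 (8*N+2)).ncard =
      2 * (myQ 8 1 1 (8*N+2) ∩ {x | 0 < x.2.1}).ncard := by
    apply ncard_double (fun x : ℤ × ℤ × ℤ => (x.1, -x.2.1, x.2.2))
    · exact myQ_finite _ (by norm_num) (by norm_num) (by norm_num)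
    · exact Set.inter_subset_left
    · refine ⟨?_, ?_, ?_⟩
      · rintro ⟨l, s, t⟩ hx
        simp only [myQ, Set.mem_inter_iff, Set.mem_diff, Set.mem_setOf_eq] at hx ⊢
        obtain ⟨hq, hs⟩ := hx
        refine ⟨by linear_combination hq, ?_⟩
        rintro ⟨-, h⟩
        omega
      · rintro ⟨l, s, t⟩ _ ⟨l', s', t'⟩ _ h
        simp only [Prod.mk.injEq] at h ⊢
        omega
      · rintro ⟨l, s, t⟩ hx
        simp only [myQ, Set.mem_inter_iff, Set.mem_diff, Set.mem_setOf_eq, not_and, not_lt] at hx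
        obtain ⟨hq, hnot⟩ := hx
        have hs0 : s ≤ 0 := hnot (by linear_combination hq)
        have h2 : 2*(4*(N:ℤ)+1) = 8*l^2 + s^2 + t^2 := by linarith
        obtain ⟨hso, -⟩ := odd811 hK2 h2
        refine ⟨(l, -s, t), ?_, ?_⟩
        · simp only [myQ, Set.mem_inter_iff, Set.mem_setOf_eq]
          exact ⟨by linear_combination hq, by omega⟩
        · simp only [Prod.mk.injEq, neg_neg]
  -- step d : halving
  have hd : (myQ 4 1 1 (4*N+1)).ncard = (myQ 8 1 1 (8*N+2)).ncard := by
    apply ncard_bijOn (fun x : ℤ × ℤ × ℤ => (x.1, x.2.1 + x.2.2, x.2.1 - x.2.2))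
    refine ⟨?_, ?_, ?_⟩
    · rintro ⟨l, u, v⟩ hq
      simp only [myQ, Set.mem_setOf_eq] at hq ⊢
      linear_combination 2*hq
    · rintro ⟨l, u, v⟩ _ ⟨l', u', v'⟩ _ h
      simp only [Prod.mk.injEq] at h ⊢
      omega
    · rintro ⟨l, s, t⟩ hq
      simp only [myQ, Set.mem_setOf_eq] at hq
      have h2 : 2*(4*(N:ℤ)+1) = 8*l^2 + s^2 + t^2 := by linarith
      obtain ⟨hso, hto⟩ := odd811 hK2 h2
      obtain ⟨u, hu⟩ : ∃ u, u = (s+t)/2 := ⟨_, rfl⟩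
      obtain ⟨v, hv⟩ : ∃ v, v = (s-t)/2 := ⟨_, rfl⟩
      have es : s = u + v := by omega
      have et : t = u - v := by omega
      subst es; subst et
      refine ⟨(l, u, v), ?_, rfl⟩
      simp only [myQ, Set.mem_setOf_eq]
      have h3 : 2*(4*(N:ℤ)+1) = 2*(4*l^2 + 1*u^2 + 1*v^2) := by linear_combination h2
      linarith
  omega

lemma L2 (K : ℤ) (hK : K % 2 = 1) : (myQ 4 1 1 K).ncard = 2 * (myQ 4 4 1 K).ncard := by
  set S := myQ 4 1 1 K with hS
  set A := S ∩ {x | x.2.1 % 2 = 0} with hA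
  have hfin : S.Finite := myQ_finite _ (by norm_num) (by norm_num) (by norm_num)
  have h1 : (S \ A).ncard + A.ncard = S.ncard :=
    Set.ncard_diff_add_ncard_of_subset Set.inter_subset_left hfin
  have h2 : (myQ 4 4 1 K).ncard = A.ncard := by
    apply ncard_bijOn (fun x : ℤ × ℤ × ℤ => (x.1, 2*x.2.1, x.2.2))
    refine ⟨?_, ?_, ?_⟩
    · rintro ⟨l, y, z⟩ hx
      simp only [myQ, hA, hS, Set.mem_inter_iff, Set.mem_setOf_eq] at hx ⊢
      exact ⟨by linear_combination hx, by omega⟩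
    · rintro ⟨l, y, z⟩ _ ⟨l', y', z'⟩ _ h
      simp only [Prod.mk.injEq] at h ⊢
      omega
    · rintro ⟨l, u, v⟩ hx
      simp only [myQ, hA, hS, Set.mem_inter_iff, Set.mem_setOf_eq] at hx
      obtain ⟨hq, hu⟩ := hx
      obtain ⟨y, hy⟩ : ∃ y, u = 2*y := ⟨u/2, by omega⟩
      subst hy
      refine ⟨(l, y, v), ?_, rfl⟩
      simp only [myQ, Set.mem_setOf_eq]
      linear_combination hq
  have h3 : (myQ 4 4 1 K).ncard = (S \ A).ncard := by
    apply ncard_bijOn (fun x : ℤ × ℤ × ℤ => (x.1, x.2.2, 2*x.2.1))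
    refine ⟨?_, ?_, ?_⟩
    · rintro ⟨l, y, z⟩ hx
      simp only [myQ, hA, hS, Set.mem_diff, Set.mem_inter_iff, Set.mem_setOf_eq, not_and] at hx ⊢
      have h2 : K = 4*l^2 + 4*y^2 + z^2 := by linarith
      have hz := odd441 hK h2
      exact ⟨by linear_combination hx, fun _ => by omega⟩
    · rintro ⟨l, y, z⟩ _ ⟨l', y', z'⟩ _ h
      simp only [Prod.mk.injEq] at h ⊢
      omega
    · rintro ⟨l, u, v⟩ hx
      simp only [myQ, hA, hS, Set.mem_diff, Set.mem_inter_iff, Set.mem_setOf_eq, not_and] at hx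
      obtain ⟨hq, hnot⟩ := hx
      have hu : u % 2 = 1 := by
        have := hnot (by linear_combination hq)
        omega
      have h2 : K = 4*l^2 + u^2 + v^2 := by linarith
      have hv := odd411 hK h2
      obtain ⟨y, hy⟩ : ∃ y, v = 2*y := ⟨v/2, by omega⟩
      subst hy
      refine ⟨(l, y, u), ?_, rfl⟩
      simp only [myQ, Set.mem_setOf_eq]
      linear_combination hq
  omega

lemma L3 (N : ℕ) (hN : N % 2 = 0) :
    2 * RtCount 2 2 2 (N : ℤ) = (myQ 4 4 1 (4*N+1)).ncard := by
  have hK2 : (4*(N:ℤ)+1) % 2 = 1 := by omega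
  have hK8 : (4*(N:ℤ)+1) % 8 = 1 := by omega
  -- step a
  have ha : RtCount 2 2 2 (N : ℤ) =
      (myQ 8 8 1 (4*N+1) ∩ {x | 0 < x.2.2}).ncard := by
    unfold RtCount
    apply ncard_bijOn (fun x : ℤ × ℤ × ℕ => (x.1, x.2.1, 2*(x.2.2:ℤ)+1))
    refine ⟨?_, ?_, ?_⟩
    · rintro ⟨a, b, c⟩ hx
      simp only [Set.mem_setOf_eq] at hx
      push_cast at hx
      simp only [myQ, Set.mem_inter_iff, Set.mem_setOf_eq]
      refine ⟨?_, by omega⟩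
      linear_combination 4*hx + 4*(tri_cast c)
    · rintro ⟨a, b, c⟩ _ ⟨a', b', c'⟩ _ h
      simp only [Prod.mk.injEq] at h ⊢
      omega
    · rintro ⟨a, b, w⟩ hx
      simp only [myQ, Set.mem_inter_iff, Set.mem_setOf_eq] at hx
      obtain ⟨hq, hw⟩ := hx
      have h2 : 4*(N:ℤ)+1 = 8*a^2 + 8*b^2 + w^2 := by linarith
      have hwo := odd881 hK2 h2
      obtain ⟨c, hc⟩ : ∃ c : ℕ, w = 2*(c:ℤ)+1 := ⟨((w-1)/2).toNat, by omega⟩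
      subst hc
      refine ⟨(a, b, c), ?_, rfl⟩
      simp only [Set.mem_setOf_eq]
      have h4 : 4*(N:ℤ) = 4*(2*a^2 + 2*b^2 + 2*(tri c : ℤ)) := by
        linear_combination h2 - 4*(tri_cast c)
      push_cast
      linarith
  -- step b
  have hb : (myQ 8 8 1 (4*N+1)).ncard =
      2 * (myQ 8 8 1 (4*N+1) ∩ {x | 0 < x.2.2}).ncard := by
    apply ncard_double (fun x : ℤ × ℤ × ℤ => (x.1, x.2.1, -x.2.2))
    · exact myQ_finite _ (by norm_num) (by norm_num) (by norm_num)
    · exact Set.inter_subset_left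
    · refine ⟨?_, ?_, ?_⟩
      · rintro ⟨a, b, w⟩ hx
        simp only [myQ, Set.mem_inter_iff, Set.mem_diff, Set.mem_setOf_eq] at hx ⊢
        obtain ⟨hq, hw⟩ := hx
        refine ⟨by linear_combination hq, ?_⟩
        rintro ⟨-, h⟩
        omega
      · rintro ⟨a, b, w⟩ _ ⟨a', b', w'⟩ _ h
        simp only [Prod.mk.injEq] at h ⊢
        omega
      · rintro ⟨a, b, w⟩ hx
        simp only [myQ, Set.mem_inter_iff, Set.mem_diff, Set.mem_setOf_eq, not_and, not_lt] at hx
        obtain ⟨hq, hnot⟩ := hx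
        have hw0 : w ≤ 0 := hnot (by linear_combination hq)
        have h2 : 4*(N:ℤ)+1 = 8*a^2 + 8*b^2 + w^2 := by linarith
        have hwo := odd881 hK2 h2
        refine ⟨(a, b, -w), ?_, ?_⟩
        · simp only [myQ, Set.mem_inter_iff, Set.mem_setOf_eq]
          exact ⟨by linear_combination hq, by omega⟩
        · simp only [Prod.mk.injEq, neg_neg]
  -- step c
  have hc : (myQ 8 8 1 (4*N+1)).ncard = (myQ 4 4 1 (4*N+1)).ncard := by
    apply ncard_bijOn (fun x : ℤ × ℤ × ℤ => (x.1 + x.2.1, x.1 - x.2.1, x.2.2))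
    refine ⟨?_, ?_, ?_⟩
    · rintro ⟨a, b, w⟩ hx
      simp only [myQ, Set.mem_setOf_eq] at hx ⊢
      linear_combination hx
    · rintro ⟨a, b, w⟩ _ ⟨a', b', w'⟩ _ h
      simp only [Prod.mk.injEq] at h ⊢
      omega
    · rintro ⟨x, y, z⟩ hx
      simp only [myQ, Set.mem_setOf_eq] at hx
      have h2 : 4*(N:ℤ)+1 = 4*x^2 + 4*y^2 + z^2 := by linarith
      have hxy := par441 hK8 h2
      obtain ⟨a, ha2⟩ : ∃ a, x + y = 2*a := ⟨(x+y)/2, by omega⟩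
      obtain ⟨b, hb2⟩ : ∃ b, x - y = 2*b := ⟨(x-y)/2, by omega⟩
      have ex : x = a + b := by omega
      have ey : y = a - b := by omega
      subst ex; subst ey
      refine ⟨(a, b, z), ?_, rfl⟩
      simp only [myQ, Set.mem_setOf_eq]
      linear_combination h2
  omega

lemma L4 (N : ℕ) (hN : N % 2 = 1) :
    8 * TCount 2 4 4 ((N : ℤ) - 1) = (myQ 4 4 1 (4*N+1)).ncard := by
  have hK2 : (4*(N:ℤ)+1) % 2 = 1 := by omega
  have hK8 : (4*(N:ℤ)+1) % 8 = 5 := by omega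
  -- step a
  have ha : TCount 2 4 4 ((N : ℤ) - 1) =
      (myQ 1 2 2 (4*N+1) ∩ {x | 0 < x.1 ∧ 0 < x.2.1 ∧ 0 < x.2.2}).ncard := by
    unfold TCount
    apply ncard_bijOn (fun x : ℕ × ℕ × ℕ => (2*(x.1:ℤ)+1, 2*(x.2.1:ℤ)+1, 2*(x.2.2:ℤ)+1))
    refine ⟨?_, ?_, ?_⟩
    · rintro ⟨a, b, c⟩ hx
      simp only [Set.mem_setOf_eq] at hx
      push_cast at hx
      simp only [myQ, Set.mem_inter_iff, Set.mem_setOf_eq]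
      refine ⟨?_, by omega, by omega, by omega⟩
      linear_combination 4*hx + 4*(tri_cast a) + 8*(tri_cast b) + 8*(tri_cast c)
    · rintro ⟨a, b, c⟩ _ ⟨a', b', c'⟩ _ h
      simp only [Prod.mk.injEq] at h ⊢
      omega
    · rintro ⟨x, y, z⟩ hx
      simp only [myQ, Set.mem_inter_iff, Set.mem_setOf_eq] at hx
      obtain ⟨hq, hx1, hx2, hx3⟩ := hx
      have h2 : 4*(N:ℤ)+1 = x^2 + 2*y^2 + 2*z^2 := by linarith
      obtain ⟨hxo, hyo, hzo⟩ := odd122 hK8 h2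
      obtain ⟨a, ha2⟩ : ∃ a : ℕ, x = 2*(a:ℤ)+1 := ⟨((x-1)/2).toNat, by omega⟩
      obtain ⟨b, hb2⟩ : ∃ b : ℕ, y = 2*(b:ℤ)+1 := ⟨((y-1)/2).toNat, by omega⟩
      obtain ⟨c, hc2⟩ : ∃ c : ℕ, z = 2*(c:ℤ)+1 := ⟨((z-1)/2).toNat, by omega⟩
      subst ha2; subst hb2; subst hc2
      refine ⟨(a, b, c), ?_, rfl⟩
      simp only [Set.mem_setOf_eq]
      have h4 : 4*((N:ℤ) - 1) = 4*(2*(tri a : ℤ) + 4*(tri b : ℤ) + 4*(tri c : ℤ)) := by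
        linear_combination h2 - 4*(tri_cast a) - 8*(tri_cast b) - 8*(tri_cast c)
      push_cast
      linarith
  -- step b : drop positivity of first coordinate
  have hb : (myQ 1 2 2 (4*N+1) ∩ {x | 0 < x.2.1 ∧ 0 < x.2.2}).ncard =
      2 * (myQ 1 2 2 (4*N+1) ∩ {x | 0 < x.1 ∧ 0 < x.2.1 ∧ 0 < x.2.2}).ncard := by
    apply ncard_double (fun x : ℤ × ℤ × ℤ => (-x.1, x.2.1, x.2.2))
    · exact (myQ_finite _ (by norm_num) (by norm_num) (by norm_num)).subset Set.inter_subset_left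
    · exact fun x hx => ⟨hx.1, hx.2.2⟩
    · refine ⟨?_, ?_, ?_⟩
      · rintro ⟨x, y, z⟩ hx
        simp only [myQ, Set.mem_inter_iff, Set.mem_diff, Set.mem_setOf_eq] at hx ⊢
        obtain ⟨hq, hx1, hx2, hx3⟩ := hx
        refine ⟨⟨by linear_combination hq, hx2, hx3⟩, ?_⟩
        rintro ⟨-, h, -⟩
        omega
      · rintro ⟨x, y, z⟩ _ ⟨x', y', z'⟩ _ h
        simp only [Prod.mk.injEq] at h ⊢
        omega
      · rintro ⟨x, y, z⟩ hx
        simp only [myQ, Set.mem_inter_iff, Set.mem_diff, Set.mem_setOf_eq] at hx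
        obtain ⟨⟨hq, hy, hz⟩, hnot⟩ := hx
        have hx0 : x ≤ 0 := by
          by_contra h
          exact hnot ⟨hq, by omega, hy, hz⟩
        have h2 : 4*(N:ℤ)+1 = x^2 + 2*y^2 + 2*z^2 := by linarith
        obtain ⟨hxo, -, -⟩ := odd122 hK8 h2
        refine ⟨(-x, y, z), ?_, ?_⟩
        · simp only [myQ, Set.mem_inter_iff, Set.mem_setOf_eq]
          exact ⟨by linear_combination hq, by omega, hy, hz⟩
        · simp only [Prod.mk.injEq, neg_neg]
  -- step c : drop positivity of second coordinate
  have hc : (myQ 1 2 2 (4*N+1) ∩ {x | 0 < x.2.2}).ncard =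
      2 * (myQ 1 2 2 (4*N+1) ∩ {x | 0 < x.2.1 ∧ 0 < x.2.2}).ncard := by
    apply ncard_double (fun x : ℤ × ℤ × ℤ => (x.1, -x.2.1, x.2.2))
    · exact (myQ_finite _ (by norm_num) (by norm_num) (by norm_num)).subset Set.inter_subset_left
    · exact fun x hx => ⟨hx.1, hx.2.2⟩
    · refine ⟨?_, ?_, ?_⟩
      · rintro ⟨x, y, z⟩ hx
        simp only [myQ, Set.mem_inter_iff, Set.mem_diff, Set.mem_setOf_eq] at hx ⊢
        obtain ⟨hq, hy, hz⟩ := hx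
        refine ⟨⟨by linear_combination hq, hz⟩, ?_⟩
        rintro ⟨-, h, -⟩
        omega
      · rintro ⟨x, y, z⟩ _ ⟨x', y', z'⟩ _ h
        simp only [Prod.mk.injEq] at h ⊢
        omega
      · rintro ⟨x, y, z⟩ hx
        simp only [myQ, Set.mem_inter_iff, Set.mem_diff, Set.mem_setOf_eq] at hx
        obtain ⟨⟨hq, hz⟩, hnot⟩ := hx
        have h2 : 4*(N:ℤ)+1 = x^2 + 2*y^2 + 2*z^2 := by linarith
        obtain ⟨-, hyo, -⟩ := odd122 hK8 h2
        have hy0 : y ≤ 0 := by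
          by_contra h
          exact hnot ⟨hq, by omega, hz⟩
        refine ⟨(x, -y, z), ?_, ?_⟩
        · simp only [myQ, Set.mem_inter_iff, Set.mem_setOf_eq]
          exact ⟨by linear_combination hq, by omega, hz⟩
        · simp only [Prod.mk.injEq, neg_neg]
  -- step d : drop positivity of third coordinate
  have hd : (myQ 1 2 2 (4*N+1)).ncard =
      2 * (myQ 1 2 2 (4*N+1) ∩ {x | 0 < x.2.2}).ncard := by
    apply ncard_double (fun x : ℤ × ℤ × ℤ => (x.1, x.2.1, -x.2.2))
    · exact myQ_finite _ (by norm_num) (by norm_num) (by norm_num)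
    · exact Set.inter_subset_left
    · refine ⟨?_, ?_, ?_⟩
      · rintro ⟨x, y, z⟩ hx
        simp only [myQ, Set.mem_inter_iff, Set.mem_diff, Set.mem_setOf_eq] at hx ⊢
        obtain ⟨hq, hz⟩ := hx
        refine ⟨by linear_combination hq, ?_⟩
        rintro ⟨-, h⟩
        omega
      · rintro ⟨x, y, z⟩ _ ⟨x', y', z'⟩ _ h
        simp only [Prod.mk.injEq] at h ⊢
        omega
      · rintro ⟨x, y, z⟩ hx
        simp only [myQ, Set.mem_inter_iff, Set.mem_diff, Set.mem_setOf_eq] at hx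
        obtain ⟨hq, hnot⟩ := hx
        have h2 : 4*(N:ℤ)+1 = x^2 + 2*y^2 + 2*z^2 := by linarith
        obtain ⟨-, -, hzo⟩ := odd122 hK8 h2
        have hz0 : z ≤ 0 := by
          by_contra h
          exact hnot ⟨hq, by omega⟩
        refine ⟨(x, y, -z), ?_, ?_⟩
        · simp only [myQ, Set.mem_inter_iff, Set.mem_setOf_eq]
          exact ⟨by linear_combination hq, by omega⟩
        · simp only [Prod.mk.injEq, neg_neg]
  -- step e
  have he : (myQ 4 4 1 (4*N+1)).ncard = (myQ 1 2 2 (4*N+1)).ncard := by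
    apply ncard_bijOn (fun x : ℤ × ℤ × ℤ => (x.2.2, x.1 + x.2.1, x.1 - x.2.1))
    refine ⟨?_, ?_, ?_⟩
    · rintro ⟨x, y, z⟩ hx
      simp only [myQ, Set.mem_setOf_eq] at hx ⊢
      linear_combination hx
    · rintro ⟨x, y, z⟩ _ ⟨x', y', z'⟩ _ h
      simp only [Prod.mk.injEq] at h ⊢
      omega
    · rintro ⟨a, b, g⟩ hx
      simp only [myQ, Set.mem_setOf_eq] at hx
      have h2 : 4*(N:ℤ)+1 = a^2 + 2*b^2 + 2*g^2 := by linarith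
      obtain ⟨hao, hbo, hgo⟩ := odd122 hK8 h2
      obtain ⟨x, hx2⟩ : ∃ x, b + g = 2*x := ⟨(b+g)/2, by omega⟩
      obtain ⟨y, hy2⟩ : ∃ y, b - g = 2*y := ⟨(b-g)/2, by omega⟩
      have eb : b = x + y := by omega
      have eg : g = x - y := by omega
      subst eb; subst eg
      refine ⟨(x, y, a), ?_, rfl⟩
      simp only [myQ, Set.mem_setOf_eq]
      linear_combination h2
  omega


theorem stmt0 (N : ℕ) :
    (Even N → rTCount 1 1 1 (N : ℤ) = RtCount 2 2 2 (N : ℤ)) ∧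
    (Odd N → rTCount 1 1 1 (N : ℤ) = 4 * TCount 2 4 4 ((N : ℤ) - 1)) := by
  constructor
  · intro hE
    have hN : N % 2 = 0 := Nat.even_iff.mp hE
    have l1 := L1 N
    have l2 := L2 (4*(N:ℤ)+1) (by omega)
    have l3 := L3 N hN
    omega
  · intro hO
    have hN : N % 2 = 1 := Nat.odd_iff.mp hO
    have l1 := L1 N
    have l2 := L2 (4*(N:ℤ)+1) (by omega)
    have l4 := L4 N hN
    omega
end

section
/- For each non-negative integer N: if N is even then r(1,1,2;N) = r(2,4,4;N) + 4·rT(2,8,8;N−2), and if N is odd then r(1,1,2;N) = 4·T(2,2,4;N−1). -/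
/- ### auxiliary lemmas ### -/

lemma tri_key (n : ℕ) : 8 * (tri n : ℤ) + 1 = (2 * (n:ℤ) + 1)^2 := by
  have h : 2 * tri n = n * (n+1) :=
    Nat.mul_div_cancel' (even_iff_two_dvd.mp (Nat.even_mul_succ_self n))
  have h' : (2:ℤ) * (tri n : ℤ) = (n:ℤ) * (n+1) := by exact_mod_cast congrArg (Nat.cast (R := ℤ)) h
  linear_combination 4 * h'

lemma sgn_inj (b b' : Bool) (m m' : ℕ)
    (h : (if b then (1:ℤ) else -1) * (2*(m:ℤ)+1) = (if b' then (1:ℤ) else -1) * (2*(m':ℤ)+1)) :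
    b = b' ∧ m = m' := by
  cases b <;> cases b' <;> simp only [Bool.false_eq_true, if_true, if_false] at h
  · exact ⟨rfl, by omega⟩
  · exact absurd h (by omega)
  · exact absurd h (by omega)
  · exact ⟨rfl, by omega⟩

lemma int_abs_le_sq (x : ℤ) : |x| ≤ x^2 := by
  nlinarith [sq_abs x, abs_nonneg x]

lemma finS (N : ℤ) : {x : ℤ × ℤ × ℤ | N = x.1^2 + x.2.1^2 + 2*x.2.2^2}.Finite := by
  apply Set.Finite.subset (Set.finite_Icc (α := ℤ × ℤ × ℤ) (-N, -N, -N) (N, N, N))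
  rintro ⟨x, y, z⟩ h
  simp only [Set.mem_setOf_eq] at h
  have hx : |x| ≤ N := le_trans (int_abs_le_sq x) (by nlinarith [sq_nonneg y, sq_nonneg z])
  have hy : |y| ≤ N := le_trans (int_abs_le_sq y) (by nlinarith [sq_nonneg x, sq_nonneg z])
  have hz : |z| ≤ N := le_trans (int_abs_le_sq z) (by nlinarith [sq_nonneg x, sq_nonneg y, sq_nonneg z])
  simp only [Set.mem_Icc, Prod.le_def]
  exact ⟨⟨(abs_le.mp hx).1, (abs_le.mp hy).1, (abs_le.mp hz).1⟩,
         ⟨(abs_le.mp hx).2, (abs_le.mp hy).2, (abs_le.mp hz).2⟩⟩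

lemma even_case (N : ℕ) (hN : Even N) :
    {x : ℤ × ℤ × ℤ | (N:ℤ) = x.1^2 + x.2.1^2 + 2*x.2.2^2}.ncard =
    {x : ℤ × ℤ × ℤ | (N:ℤ) = 2*x.1^2 + 4*x.2.1^2 + 4*x.2.2^2}.ncard +
    4 * {x : ℤ × ℕ × ℕ | (N:ℤ) - 2 = 2*x.1^2 + 8*(tri x.2.1 : ℤ) + 8*(tri x.2.2 : ℤ)}.ncard := by
  obtain ⟨K, hK⟩ := hN
  have hNK : (N:ℤ) = (K:ℤ) + (K:ℤ) := by exact_mod_cast hK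
  have hsplit : {x : ℤ × ℤ × ℤ | (N:ℤ) = x.1^2 + x.2.1^2 + 2*x.2.2^2} =
      {x : ℤ × ℤ × ℤ | ((N:ℤ) = x.1^2 + x.2.1^2 + 2*x.2.2^2) ∧ Even x.1} ∪
      {x : ℤ × ℤ × ℤ | ((N:ℤ) = x.1^2 + x.2.1^2 + 2*x.2.2^2) ∧ ¬ Even x.1} := by
    ext x; simp only [Set.mem_setOf_eq, Set.mem_union]; tauto
  have hdisj : Disjoint
      {x : ℤ × ℤ × ℤ | ((N:ℤ) = x.1^2 + x.2.1^2 + 2*x.2.2^2) ∧ Even x.1}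
      {x : ℤ × ℤ × ℤ | ((N:ℤ) = x.1^2 + x.2.1^2 + 2*x.2.2^2) ∧ ¬ Even x.1} := by
    rw [Set.disjoint_left]; rintro x ⟨_, h1⟩ ⟨_, h2⟩; exact h2 h1
  have hSfin := finS (N:ℤ)
  have hfinA : {x : ℤ × ℤ × ℤ | ((N:ℤ) = x.1^2 + x.2.1^2 + 2*x.2.2^2) ∧ Even x.1}.Finite :=
    hSfin.subset (fun x hx => hx.1)
  have hfinB : {x : ℤ × ℤ × ℤ | ((N:ℤ) = x.1^2 + x.2.1^2 + 2*x.2.2^2) ∧ ¬ Even x.1}.Finite :=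
    hSfin.subset (fun x hx => hx.1)
  have hA : {x : ℤ × ℤ × ℤ | ((N:ℤ) = x.1^2 + x.2.1^2 + 2*x.2.2^2) ∧ Even x.1}.ncard =
      {x : ℤ × ℤ × ℤ | (N:ℤ) = 2*x.1^2 + 4*x.2.1^2 + 4*x.2.2^2}.ncard := by
    rw [← Nat.card_coe_set_eq, ← Nat.card_coe_set_eq]
    apply Nat.card_congr
    refine (Equiv.ofBijective
      (fun p : {x : ℤ × ℤ × ℤ | (N:ℤ) = 2*x.1^2 + 4*x.2.1^2 + 4*x.2.2^2} =>
        (⟨(2*p.1.2.1, 2*p.1.2.2, p.1.1), ?_⟩ :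
          {x : ℤ × ℤ × ℤ | ((N:ℤ) = x.1^2 + x.2.1^2 + 2*x.2.2^2) ∧ Even x.1})) ⟨?_, ?_⟩).symm
    · obtain ⟨⟨a, b, c⟩, hp⟩ := p
      simp only [Set.mem_setOf_eq] at hp ⊢
      exact ⟨by linear_combination hp, ⟨b, by ring⟩⟩
    · rintro ⟨⟨a, b, c⟩, hp⟩ ⟨⟨a', b', c'⟩, hp'⟩ h
      simp only [Subtype.mk.injEq, Prod.mk.injEq] at h ⊢
      omega
    · rintro ⟨⟨x, y, z⟩, heq, hx⟩
      simp only [Set.mem_setOf_eq] at heq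
      replace hx : Even x := hx
      obtain ⟨a, rfl⟩ := hx
      have hy2 : Even (y^2) := ⟨(K:ℤ) - 2*a^2 - z^2, by linear_combination hNK - heq⟩
      obtain ⟨b, rfl⟩ := (Int.even_pow.mp hy2).1
      refine ⟨⟨(z, a, b), ?_⟩, ?_⟩
      · simp only [Set.mem_setOf_eq]; linear_combination heq
      · apply Subtype.ext; simp only [Prod.mk.injEq]; exact ⟨by ring, by ring, trivial⟩
  have hB : {x : ℤ × ℤ × ℤ | ((N:ℤ) = x.1^2 + x.2.1^2 + 2*x.2.2^2) ∧ ¬ Even x.1}.ncard =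
      4 * {x : ℤ × ℕ × ℕ | (N:ℤ) - 2 = 2*x.1^2 + 8*(tri x.2.1 : ℤ) + 8*(tri x.2.2 : ℤ)}.ncard := by
    rw [← Nat.card_coe_set_eq, ← Nat.card_coe_set_eq]
    have key : Nat.card {x : ℤ × ℤ × ℤ | ((N:ℤ) = x.1^2 + x.2.1^2 + 2*x.2.2^2) ∧ ¬ Even x.1} =
        Nat.card ((Bool × Bool) ×
          {x : ℤ × ℕ × ℕ | (N:ℤ) - 2 = 2*x.1^2 + 8*(tri x.2.1 : ℤ) + 8*(tri x.2.2 : ℤ)}) := by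
      apply Nat.card_congr
      refine (Equiv.ofBijective
        (fun q : (Bool × Bool) ×
            {x : ℤ × ℕ × ℕ | (N:ℤ) - 2 = 2*x.1^2 + 8*(tri x.2.1 : ℤ) + 8*(tri x.2.2 : ℤ)} =>
          (⟨((if q.1.1 then 1 else -1) * (2*(q.2.1.2.1:ℤ)+1),
             (if q.1.2 then 1 else -1) * (2*(q.2.1.2.2:ℤ)+1), q.2.1.1), ?_⟩ :
            {x : ℤ × ℤ × ℤ | ((N:ℤ) = x.1^2 + x.2.1^2 + 2*x.2.2^2) ∧ ¬ Even x.1})) ⟨?_, ?_⟩).symm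
      · obtain ⟨⟨b1, b2⟩, ⟨⟨l, m, n⟩, hq⟩⟩ := q
        simp only [Set.mem_setOf_eq] at hq
        simp only [Set.mem_setOf_eq]
        constructor
        · rcases b1 <;> rcases b2 <;> simp only [Bool.false_eq_true, if_true, if_false] <;>
            · linear_combination hq + tri_key m + tri_key n
        · rcases b1 <;> simp only [Bool.false_eq_true, if_true, if_false] <;>
            · rintro ⟨c, hc⟩; omega
      · rintro ⟨⟨b1, b2⟩, ⟨⟨l, m, n⟩, hq⟩⟩ ⟨⟨b1', b2'⟩, ⟨⟨l', m', n'⟩, hq'⟩⟩ h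
        simp only [Subtype.mk.injEq, Prod.mk.injEq] at h
        obtain ⟨h1, h2, h3⟩ := h
        obtain ⟨hb1, hm⟩ := sgn_inj _ _ _ _ h1
        obtain ⟨hb2, hn⟩ := sgn_inj _ _ _ _ h2
        subst hb1; subst hb2; subst hm; subst hn; subst h3
        rfl
      · rintro ⟨⟨x, y, z⟩, heq, hx⟩
        simp only [Set.mem_setOf_eq] at heq
        replace hx : ¬ Even x := hx
        have hy : ¬ Even y := by
          intro hy
          obtain ⟨b, hb⟩ := hy
          have h3 : Even (x^2) :=
            ⟨(K:ℤ) - 2*b^2 - z^2, by rw [hb] at heq; linear_combination hNK - heq⟩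
          exact hx (Int.even_pow.mp h3).1
        have hxa : (x.natAbs : ℤ) = 2 * ((x.natAbs - 1)/2 : ℕ) + 1 := by
          rw [Int.even_iff] at hx; omega
        have hya : (y.natAbs : ℤ) = 2 * ((y.natAbs - 1)/2 : ℕ) + 1 := by
          rw [Int.even_iff] at hy; omega
        have hx2 : x^2 = 8*(tri ((x.natAbs - 1)/2) : ℤ) + 1 := by
          rw [← sq_abs, Int.abs_eq_natAbs, hxa, ← tri_key]
        have hy2 : y^2 = 8*(tri ((y.natAbs - 1)/2) : ℤ) + 1 := by
          rw [← sq_abs, Int.abs_eq_natAbs, hya, ← tri_key]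
        refine ⟨⟨(decide (0 < x), decide (0 < y)),
          ⟨(z, (x.natAbs - 1)/2, (y.natAbs - 1)/2), ?_⟩⟩, ?_⟩
        · simp only [Set.mem_setOf_eq]; linear_combination heq + hx2 + hy2
        · apply Subtype.ext
          simp only [Prod.mk.injEq, decide_eq_true_eq]
          have hxc := Int.natAbs_eq x
          have hyc := Int.natAbs_eq y
          refine ⟨?_, ?_, trivial⟩
          · split_ifs <;> omega
          · split_ifs <;> omega
    rw [key, Nat.card_prod, Nat.card_prod]
    have : Nat.card Bool = 2 := by simp [Nat.card_eq_fintype_card]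
    rw [this]
  rw [hsplit, Set.ncard_union_eq hdisj hfinA hfinB, hA, hB]

lemma U_odd (N : ℕ) (hN : Odd N) (u v w : ℤ) (heq : 4*(N:ℤ) = u^2 + v^2 + 2*w^2)
    (hdvd : (4:ℤ) ∣ (u - v)) : ¬ Even u ∧ ¬ Even v ∧ ¬ Even w := by
  obtain ⟨P, hP⟩ := hN
  have hNP : (N:ℤ) = 2*(P:ℤ) + 1 := by exact_mod_cast hP
  obtain ⟨k, hk⟩ := hdvd
  have hu : ¬ Even u := by
    rintro ⟨a, ha⟩
    have hv : v = 2*a - 4*k := by omega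
    have h2 : 2*(w^2) = 2*(2*(N:ℤ) - 2*a^2 - 2*(a-2*k)^2) := by
      linear_combination -heq - (u + 2*a) * ha - (v + (2*a - 4*k)) * hv
    have hw2' : w^2 = 2*(N:ℤ) - 2*a^2 - 2*(a-2*k)^2 :=
      mul_left_cancel₀ two_ne_zero h2
    have hwe : Even (w^2) := ⟨(N:ℤ) - a^2 - (a-2*k)^2, by linear_combination hw2'⟩
    obtain ⟨c, hc⟩ := (Int.even_pow.mp hwe).1
    have h4 : 4*(N:ℤ) = 4*(a^2 + (a-2*k)^2 + 2*c^2) := by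
      linear_combination heq + (u + 2*a) * ha + (v + (2*a - 4*k)) * hv + 2*(w + (c + c)) * hc
    have hNeq : (N:ℤ) = a^2 + (a-2*k)^2 + 2*c^2 :=
      mul_left_cancel₀ (by norm_num : (4:ℤ) ≠ 0) h4
    rcases Int.even_or_odd a with ⟨p, hp⟩ | ⟨p, hp⟩
    · have : Even (N:ℤ) :=
        ⟨2*p^2 + 2*(p-k)^2 + c^2, by linear_combination hNeq + (a + 2*p)*hp + (a + 2*p - 4*k)*hp⟩
      rw [Int.even_coe_nat, Nat.even_iff] at this
      omega
    · have : Even (N:ℤ) :=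
        ⟨2*p^2 + 2*p + 2*(p-k)^2 + 2*(p-k) + 1 + c^2, by
          linear_combination hNeq + (a + 2*p + 1)*hp + (a + 2*p + 1 - 4*k)*hp⟩
      rw [Int.even_coe_nat, Nat.even_iff] at this
      omega
  have hv : ¬ Even v := by
    rintro ⟨b, hb⟩
    exact hu ⟨b + 2*k, by omega⟩
  refine ⟨hu, hv, ?_⟩
  rintro ⟨c, hc⟩
  obtain ⟨s, hs⟩ := Int.not_even_iff_odd.mp hu
  obtain ⟨t, ht⟩ := Int.not_even_iff_odd.mp hv
  obtain ⟨e, he⟩ := Int.even_mul_succ_self s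
  obtain ⟨f, hf⟩ := Int.even_mul_succ_self t
  have hM : ∃ M : ℤ, 8*M + 2 = 8*(P:ℤ) + 4 :=
    ⟨e + f + c^2, by
      linear_combination -heq + 4*hNP - (u + 2*s + 1)*hs - 4*he - (v + 2*t + 1)*ht - 4*hf
        - 2*(w + c + c)*hc⟩
  obtain ⟨M, hMe⟩ := hM
  omega

lemma odd_case (N : ℕ) (hN : Odd N) :
    {x : ℤ × ℤ × ℤ | (N:ℤ) = x.1^2 + x.2.1^2 + 2*x.2.2^2}.ncard =
    4 * {x : ℕ × ℕ × ℕ |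
      (N:ℤ) - 1 = 2*(tri x.1 : ℤ) + 2*(tri x.2.1 : ℤ) + 4*(tri x.2.2 : ℤ)}.ncard := by
  have step1 : {x : ℤ × ℤ × ℤ | (N:ℤ) = x.1^2 + x.2.1^2 + 2*x.2.2^2}.ncard =
      {x : ℤ × ℤ × ℤ | (4*(N:ℤ) = x.1^2 + x.2.1^2 + 2*x.2.2^2) ∧ (4:ℤ) ∣ (x.1 - x.2.1)}.ncard := by
    rw [← Nat.card_coe_set_eq, ← Nat.card_coe_set_eq]
    apply Nat.card_congr
    refine Equiv.ofBijective
      (fun p : {x : ℤ × ℤ × ℤ | (N:ℤ) = x.1^2 + x.2.1^2 + 2*x.2.2^2} =>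
        (⟨(p.1.1 + p.1.2.1 + 2*p.1.2.2, p.1.1 + p.1.2.1 - 2*p.1.2.2, p.1.1 - p.1.2.1), ?_⟩ :
          {x : ℤ × ℤ × ℤ | (4*(N:ℤ) = x.1^2 + x.2.1^2 + 2*x.2.2^2) ∧ (4:ℤ) ∣ (x.1 - x.2.1)}))
      ⟨?_, ?_⟩
    · obtain ⟨⟨x, y, z⟩, hp⟩ := p
      simp only [Set.mem_setOf_eq] at hp ⊢
      exact ⟨by linear_combination 4*hp, ⟨z, by ring⟩⟩
    · rintro ⟨⟨x, y, z⟩, hp⟩ ⟨⟨x', y', z'⟩, hp'⟩ h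
      simp only [Subtype.mk.injEq, Prod.mk.injEq] at h ⊢
      omega
    · rintro ⟨⟨u, v, w⟩, heq, hdvd⟩
      simp only [Set.mem_setOf_eq] at heq hdvd
      obtain ⟨hu, hv, hw⟩ := U_odd N hN u v w heq hdvd
      obtain ⟨k, hk⟩ := hdvd
      obtain ⟨s, hs⟩ := Int.not_even_iff_odd.mp hu
      obtain ⟨t, ht⟩ := Int.not_even_iff_odd.mp hw
      have hveq : v = 2*s + 1 - 4*k := by omega
      have hmem : (N:ℤ) = (s+t+1-k)^2 + (s-t-k)^2 + 2*k^2 := by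
        have h4 : 4*(N:ℤ) = 4*((s+t+1-k)^2 + (s-t-k)^2 + 2*k^2) := by
          linear_combination heq + (u + 2*s + 1)*hs + (v + 2*s + 1 - 4*k)*hveq + 2*(w + 2*t + 1)*ht
        exact mul_left_cancel₀ (by norm_num : (4:ℤ) ≠ 0) h4
      refine ⟨⟨(s+t+1-k, s-t-k, k), hmem⟩, ?_⟩
      apply Subtype.ext
      simp only [Prod.mk.injEq]
      refine ⟨by omega, by omega, by omega⟩
  have step2 : {x : ℤ × ℤ × ℤ |
        (4*(N:ℤ) = x.1^2 + x.2.1^2 + 2*x.2.2^2) ∧ (4:ℤ) ∣ (x.1 - x.2.1)}.ncard =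
      4 * {x : ℕ × ℕ × ℕ |
        (N:ℤ) - 1 = 2*(tri x.1 : ℤ) + 2*(tri x.2.1 : ℤ) + 4*(tri x.2.2 : ℤ)}.ncard := by
    rw [← Nat.card_coe_set_eq, ← Nat.card_coe_set_eq]
    have key : Nat.card {x : ℤ × ℤ × ℤ |
          (4*(N:ℤ) = x.1^2 + x.2.1^2 + 2*x.2.2^2) ∧ (4:ℤ) ∣ (x.1 - x.2.1)} =
        Nat.card ((Bool × Bool) × {x : ℕ × ℕ × ℕ |
          (N:ℤ) - 1 = 2*(tri x.1 : ℤ) + 2*(tri x.2.1 : ℤ) + 4*(tri x.2.2 : ℤ)}) := by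
      apply Nat.card_congr
      refine (Equiv.ofBijective
        (fun q : (Bool × Bool) × {x : ℕ × ℕ × ℕ |
            (N:ℤ) - 1 = 2*(tri x.1 : ℤ) + 2*(tri x.2.1 : ℤ) + 4*(tri x.2.2 : ℤ)} =>
          (⟨((if q.1.1 then 1 else -1) * (2*(q.2.1.1:ℤ)+1),
             (if q.1.1 then 1 else -1) * (if (q.2.1.1 + q.2.1.2.1) % 2 = 0 then 1 else -1)
               * (2*(q.2.1.2.1:ℤ)+1),
             (if q.1.2 then 1 else -1) * (2*(q.2.1.2.2:ℤ)+1)), ?_⟩ :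
            {x : ℤ × ℤ × ℤ |
              (4*(N:ℤ) = x.1^2 + x.2.1^2 + 2*x.2.2^2) ∧ (4:ℤ) ∣ (x.1 - x.2.1)})) ⟨?_, ?_⟩).symm
      · obtain ⟨⟨b1, b2⟩, ⟨⟨l, m, n⟩, hq⟩⟩ := q
        simp only [Set.mem_setOf_eq] at hq
        simp only [Set.mem_setOf_eq]
        constructor
        · rcases b1 <;> rcases b2 <;> split_ifs <;>
            linear_combination 4*hq + tri_key l + tri_key m + 2*tri_key n
        · rcases b1 <;> split_ifs <;> (ring_nf; omega)
      · rintro ⟨⟨b1, b2⟩, ⟨⟨l, m, n⟩, hq⟩⟩ ⟨⟨b1', b2'⟩, ⟨⟨l', m', n'⟩, hq'⟩⟩ h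
        simp only [Subtype.mk.injEq, Prod.mk.injEq] at h
        obtain ⟨h1, h2, h3⟩ := h
        have hb1 : b1 = b1' ∧ l = l' := by
          rcases b1 <;> rcases b1' <;>
            simp only [Bool.false_eq_true, if_true, if_false] at h1 <;>
            first
            | exact ⟨rfl, by omega⟩
            | exact absurd h1 (by omega)
        obtain ⟨hb1e, hle⟩ := hb1
        subst hb1e; subst hle
        have hb2 : b2 = b2' ∧ n = n' := by
          rcases b2 <;> rcases b2' <;>
            simp only [Bool.false_eq_true, if_true, if_false] at h3 <;>
            first
            | exact ⟨rfl, by omega⟩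
            | exact absurd h3 (by omega)
        obtain ⟨hb2e, hne⟩ := hb2
        subst hb2e; subst hne
        have hme : m = m' := by
          rcases b1 <;> simp only [Bool.false_eq_true, if_true, if_false] at h2 <;>
            split_ifs at h2 <;> omega
        subst hme
        rfl
      · rintro ⟨⟨u, v, w⟩, heq, hdvd⟩
        simp only [Set.mem_setOf_eq] at heq hdvd
        obtain ⟨hu, hv, hw⟩ := U_odd N hN u v w heq hdvd
        have hua : (u.natAbs : ℤ) = 2 * ((u.natAbs - 1)/2 : ℕ) + 1 := by
          rw [Int.even_iff] at hu; omega
        have hva : (v.natAbs : ℤ) = 2 * ((v.natAbs - 1)/2 : ℕ) + 1 := by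
          rw [Int.even_iff] at hv; omega
        have hwa : (w.natAbs : ℤ) = 2 * ((w.natAbs - 1)/2 : ℕ) + 1 := by
          rw [Int.even_iff] at hw; omega
        have hu2 : u^2 = 8*(tri ((u.natAbs - 1)/2) : ℤ) + 1 := by
          rw [← sq_abs, Int.abs_eq_natAbs, hua, ← tri_key]
        have hv2 : v^2 = 8*(tri ((v.natAbs - 1)/2) : ℤ) + 1 := by
          rw [← sq_abs, Int.abs_eq_natAbs, hva, ← tri_key]
        have hw2 : w^2 = 8*(tri ((w.natAbs - 1)/2) : ℤ) + 1 := by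
          rw [← sq_abs, Int.abs_eq_natAbs, hwa, ← tri_key]
        have hmem : (N:ℤ) - 1 = 2*(tri ((u.natAbs - 1)/2) : ℤ) +
            2*(tri ((v.natAbs - 1)/2) : ℤ) + 4*(tri ((w.natAbs - 1)/2) : ℤ) := by
          have h4 : 4*((N:ℤ) - 1) = 4*(2*(tri ((u.natAbs - 1)/2) : ℤ) +
              2*(tri ((v.natAbs - 1)/2) : ℤ) + 4*(tri ((w.natAbs - 1)/2) : ℤ)) := by
            linear_combination heq + hu2 + hv2 + 2*hw2
          exact mul_left_cancel₀ (by norm_num : (4:ℤ) ≠ 0) h4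
        refine ⟨⟨(decide (0 < u), decide (0 < w)),
          ⟨((u.natAbs - 1)/2, (v.natAbs - 1)/2, (w.natAbs - 1)/2), hmem⟩⟩, ?_⟩
        apply Subtype.ext
        simp only [Prod.mk.injEq, decide_eq_true_eq]
        refine ⟨?_, ?_, ?_⟩
        · split_ifs <;> omega
        · split_ifs <;> omega
        · split_ifs <;> omega
    rw [key, Nat.card_prod, Nat.card_prod]
    have : Nat.card Bool = 2 := by simp [Nat.card_eq_fintype_card]
    rw [this]
  rw [step1, step2]

theorem stmt3 (N : ℕ) :
    (Even N → rCount 1 1 2 (N : ℤ) =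
      rCount 2 4 4 (N : ℤ) + 4 * rTCount 2 8 8 ((N : ℤ) - 2)) ∧
    (Odd N → rCount 1 1 2 (N : ℤ) = 4 * TCount 2 2 4 ((N : ℤ) - 1)) := by
  constructor
  · intro hN
    simp only [rCount, rTCount, Nat.cast_one, Nat.cast_ofNat, one_mul]
    exact even_case N hN
  · intro hN
    simp only [rCount, TCount, Nat.cast_one, Nat.cast_ofNat, one_mul]
    exact odd_case N hN
end

section
/- For each non-negative integer N the following hold: T(1,1,2;4N) = Rt(1,2,1;N); T(1,1,2;4N+1) = 2·rT(2,1,2;N); T(1,1,2;4N+2) = 2·rT(1,1,4;N); T(1,1,2;4N+3) = 4·T(1,2,4;N); r(1,2,4;2N) = r(1,2,2;N); and r(1,2,4;2N+1) = 2·T(1,1,2;N). -/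
section helpers

lemma tri2 (n : ℕ) : 2 * tri n = n * (n + 1) :=
  Nat.mul_div_cancel' (Nat.even_mul_succ_self n).two_dvd

lemma tri_lin (n : ℕ) : (2 * (n : ℤ) + 1) ^ 2 = 8 * (tri n : ℤ) + 1 := by
  have h : (2 * (tri n : ℤ)) = (n : ℤ) * ((n : ℤ) + 1) := by
    exact_mod_cast congrArg (Nat.cast : ℕ → ℤ) (tri2 n)
  linear_combination (-4 : ℤ) * h

/-- signed odd number -/
def eps (b : Bool) (n : ℕ) : ℤ := bif b then 2 * n + 1 else -(2 * n + 1)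

lemma eps_sq (b : Bool) (n : ℕ) : (eps b n) ^ 2 = 8 * (tri n : ℤ) + 1 := by
  cases b <;> simp only [eps, cond_true, cond_false] <;> rw [← tri_lin n] <;> ring

lemma eps_odd (b : Bool) (n : ℕ) : Odd (eps b n) := by
  cases b <;> simp [eps, Int.odd_iff]

lemma eps_inj {b b' : Bool} {n n' : ℕ} (h : eps b n = eps b' n') : b = b' ∧ n = n' := by
  cases b <;> cases b' <;> simp [eps] at h ⊢ <;> omega

lemma eps_surj {x : ℤ} (hx : Odd x) : ∃ b n, x = eps b n := by
  rcases hx with ⟨k, hk⟩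
  rcases le_or_gt 0 k with h | h
  · exact ⟨true, k.toNat, by simp [eps]; omega⟩
  · exact ⟨false, (-k-1).toNat, by simp [eps]; omega⟩

lemma sq2 (x : ℤ) : x ^ 2 % 2 = x % 2 := by
  conv_lhs => rw [sq, Int.mul_emod]
  have h : x % 2 = 0 ∨ x % 2 = 1 := by omega
  rcases h with h | h <;> rw [h] <;> norm_num

lemma Geven {M s D E : ℤ} (hG : 2 * s ^ 2 + 2 * D ^ 2 + E ^ 2 = M) (hM : M % 2 = 0) :
    E % 2 = 0 := by
  have hE := sq2 E
  set S := s ^ 2; set DD := D ^ 2; set EE := E ^ 2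
  omega

lemma odd_sq8 {x : ℤ} (hx : Odd x) : ∃ k, x ^ 2 = 8 * k + 1 := by
  rcases hx with ⟨k, hk⟩
  have h2 : Even (k * (k+1)) := Int.even_mul_succ_self k
  rcases h2 with ⟨m, hm⟩
  exact ⟨m, by subst hk; linear_combination 4 * hm⟩

end helpers

lemma cardA (m : ℤ) :
    Nat.card {x : ℕ × ℕ × ℕ // m = (tri x.1 : ℤ) + (tri x.2.1 : ℤ) + 2 * (tri x.2.2 : ℤ)} * 8 =
    Nat.card {p : ℤ × ℤ × ℤ //
      p.1 ^ 2 + p.2.1 ^ 2 + 2 * p.2.2 ^ 2 = 8 * m + 4 ∧ Odd p.1 ∧ Odd p.2.1 ∧ Odd p.2.2} := by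
  set T := {x : ℕ × ℕ × ℕ // m = (tri x.1 : ℤ) + (tri x.2.1 : ℤ) + 2 * (tri x.2.2 : ℤ)}
  let f : (Bool × Bool × Bool) × T → {p : ℤ × ℤ × ℤ //
      p.1 ^ 2 + p.2.1 ^ 2 + 2 * p.2.2 ^ 2 = 8 * m + 4 ∧ Odd p.1 ∧ Odd p.2.1 ∧ Odd p.2.2} :=
    fun q => ⟨(eps q.1.1 q.2.1.1, eps q.1.2.1 q.2.1.2.1, eps q.1.2.2 q.2.1.2.2), by
      obtain ⟨⟨b1, b2, b3⟩, ⟨⟨a, b, c⟩, h⟩⟩ := q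
      refine ⟨?_, eps_odd _ _, eps_odd _ _, eps_odd _ _⟩
      dsimp only at h ⊢
      simp only [eps_sq]
      omega⟩
  have hf : Function.Bijective f := by
    constructor
    · rintro ⟨⟨b1, b2, b3⟩, ⟨⟨a, b, c⟩, h⟩⟩ ⟨⟨b1', b2', b3'⟩, ⟨⟨a', b', c'⟩, h'⟩⟩ hh
      simp only [f, Subtype.mk.injEq, Prod.mk.injEq] at hh
      obtain ⟨h1, h2, h3⟩ := hh
      obtain ⟨rfl, rfl⟩ := eps_inj h1
      obtain ⟨rfl, rfl⟩ := eps_inj h2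
      obtain ⟨rfl, rfl⟩ := eps_inj h3
      rfl
    · rintro ⟨⟨x, y, z⟩, heq, hx, hy, hz⟩
      obtain ⟨b1, a, rfl⟩ := eps_surj hx
      obtain ⟨b2, b, rfl⟩ := eps_surj hy
      obtain ⟨b3, c, rfl⟩ := eps_surj hz
      refine ⟨⟨⟨b1, b2, b3⟩, ⟨(a, b, c), ?_⟩⟩, ?_⟩
      · dsimp only at heq ⊢
        rw [eps_sq, eps_sq, eps_sq] at heq
        omega
      · rfl
  have h2 := Nat.card_congr (Equiv.ofBijective f hf)
  rw [Nat.card_prod, Nat.card_prod, Nat.card_prod] at h2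
  simp only [Nat.card_eq_fintype_card, Fintype.card_bool] at h2
  omega

lemma cardB (m : ℤ) :
    Nat.card {p : ℤ × ℤ × ℤ //
      p.1 ^ 2 + p.2.1 ^ 2 + 2 * p.2.2 ^ 2 = 8 * m + 4 ∧ Odd p.1 ∧ Odd p.2.1 ∧ Odd p.2.2} =
    Nat.card {p : ℤ × ℤ × ℤ // p.1 ^ 2 + p.2.1 ^ 2 + p.2.2 ^ 2 = 4 * m + 2 ∧ Odd p.2.2} := by
  refine (Nat.card_congr (Equiv.ofBijective ?_ ⟨?_, ?_⟩)).symm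
  · exact fun q => ⟨(q.1.1 + q.1.2.1, q.1.1 - q.1.2.1, q.1.2.2), by
      obtain ⟨⟨u, v, z⟩, heq, hz⟩ := q
      dsimp only at heq hz ⊢
      have key : (u + v) % 2 = 1 ∧ (u - v) % 2 = 1 := by
        have hu := sq2 u; have hv := sq2 v; have hzz := sq2 z
        rw [Int.odd_iff] at hz
        set U := u ^ 2; set V := v ^ 2; set Z := z ^ 2
        omega
      exact ⟨by linear_combination 2 * heq, by rw [Int.odd_iff]; exact key.1,
        by rw [Int.odd_iff]; exact key.2, hz⟩⟩
  · rintro ⟨⟨u, v, z⟩, h⟩ ⟨⟨u', v', z'⟩, h'⟩ hh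
    simp only [Subtype.mk.injEq, Prod.mk.injEq] at hh
    simp only [Subtype.mk.injEq, Prod.mk.injEq]
    omega
  · rintro ⟨⟨x, y, z⟩, heq, hx, hy, hz⟩
    dsimp only at heq hx hy hz
    obtain ⟨a, rfl⟩ := hx
    obtain ⟨b, rfl⟩ := hy
    refine ⟨⟨(a + b + 1, a - b, z), ?_, hz⟩, ?_⟩
    · dsimp only
      have h2 : (2 : ℤ) * ((a + b + 1) ^ 2 + (a - b) ^ 2 + z ^ 2) = 2 * (4 * m + 2) := by
        linear_combination heq
      exact mul_left_cancel₀ two_ne_zero h2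
    · apply Subtype.ext
      simp only [Prod.mk.injEq]
      exact ⟨by ring, by ring, trivial⟩


lemma cardC (M : ℤ) (hM : M % 2 = 0) :
    Nat.card {p : ℤ × ℤ × ℤ // p.1 ^ 2 + p.2.1 ^ 2 + p.2.2 ^ 2 = M ∧ Odd p.2.2} =
    4 * Nat.card {p : ℤ × ℤ × ℤ //
      2 * p.1 ^ 2 + 2 * p.2.1 ^ 2 + p.2.2 ^ 2 = M ∧ Odd p.1 ∧ Even p.2.1} := by
  set G := {p : ℤ × ℤ × ℤ //
      2 * p.1 ^ 2 + 2 * p.2.1 ^ 2 + p.2.2 ^ 2 = M ∧ Odd p.1 ∧ Even p.2.1} with hGdef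
  let f : (Bool × Bool) × G → {p : ℤ × ℤ × ℤ // p.1 ^ 2 + p.2.1 ^ 2 + p.2.2 ^ 2 = M ∧ Odd p.2.2} :=
    fun q =>
      ⟨bif q.1.1 then
          (q.2.1.1 + q.2.1.2.1, q.2.1.2.2, bif q.1.2 then q.2.1.1 - q.2.1.2.1 else q.2.1.2.1 - q.2.1.1)
        else
          (q.2.1.2.2, q.2.1.1 + q.2.1.2.1, bif q.1.2 then q.2.1.1 - q.2.1.2.1 else q.2.1.2.1 - q.2.1.1), by
        obtain ⟨⟨b1, b2⟩, ⟨⟨s, D, E⟩, hG, hs, hD⟩⟩ := q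
        dsimp only at hG hs hD
        rw [Int.odd_iff] at hs; rw [Int.even_iff] at hD
        cases b1 <;> cases b2 <;>
          simp only [cond_true, cond_false] <;>
          refine ⟨by (try dsimp only); linear_combination hG, ?_⟩ <;>
          · try dsimp only
            rw [Int.odd_iff]
            omega⟩
  have hf : Function.Bijective f := by
    constructor
    · rintro ⟨⟨b1, b2⟩, ⟨⟨s, D, E⟩, hG, hs, hD⟩⟩ ⟨⟨b1', b2'⟩, ⟨⟨s', D', E'⟩, hG', hs', hD'⟩⟩ hh
      dsimp only at hG hs hD hG' hs' hD'
      have hE : E % 2 = 0 := Geven hG hM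
      have hE' : E' % 2 = 0 := Geven hG' hM
      rw [Int.odd_iff] at hs hs'; rw [Int.even_iff] at hD hD'
      simp only [f] at hh
      cases b1 <;> cases b2 <;> cases b1' <;> cases b2' <;>
        simp only [cond_true, cond_false, Subtype.mk.injEq, Prod.mk.injEq] at hh <;>
        simp only [Prod.mk.injEq, Subtype.mk.injEq, Bool.true_eq_false, Bool.false_eq_true,
          false_and, and_false, true_and, and_true] <;>
        first
          | omega
          | (apply Subtype.ext
             try dsimp only
             simp only [Prod.mk.injEq]
             omega)
    · rintro ⟨⟨u, v, z⟩, heq, hz⟩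
      dsimp only at heq hz
      obtain ⟨c, rfl⟩ := hz
      have hpar : (u % 2 = 1 ∧ v % 2 = 0) ∨ (u % 2 = 0 ∧ v % 2 = 1) := by
        have hu2 := sq2 u; have hv2 := sq2 v; have hz2 := sq2 (2 * c + 1)
        set U := u ^ 2; set V := v ^ 2; set Z := (2 * c + 1) ^ 2
        omega
      rcases hpar with ⟨hu, hv⟩ | ⟨hu, hv⟩
      · obtain ⟨a, rfl⟩ : ∃ a, u = 2 * a + 1 := ⟨u / 2, by omega⟩
        rcases Int.even_or_odd (a + c + 1) with hp | hp
        · rw [Int.even_iff] at hp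
          refine ⟨⟨(true, false), ⟨(a - c, a + c + 1, v), by (try dsimp only); linear_combination heq,
            by (try dsimp only); rw [Int.odd_iff]; omega, by (try dsimp only); rw [Int.even_iff]; omega⟩⟩, ?_⟩
          apply Subtype.ext
          simp only [f, cond_true, cond_false, Prod.mk.injEq, and_true, true_and]
          try dsimp only
          omega
        · rw [Int.odd_iff] at hp
          refine ⟨⟨(true, true), ⟨(a + c + 1, a - c, v), by (try dsimp only); linear_combination heq,
            by (try dsimp only); rw [Int.odd_iff]; omega, by (try dsimp only); rw [Int.even_iff]; omega⟩⟩, ?_⟩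
          apply Subtype.ext
          simp only [f, cond_true, cond_false, Prod.mk.injEq, and_true, true_and]
          try dsimp only
          omega
      · obtain ⟨b, rfl⟩ : ∃ b, v = 2 * b + 1 := ⟨v / 2, by omega⟩
        rcases Int.even_or_odd (b + c + 1) with hp | hp
        · rw [Int.even_iff] at hp
          refine ⟨⟨(false, false), ⟨(b - c, b + c + 1, u), by (try dsimp only); linear_combination heq,
            by (try dsimp only); rw [Int.odd_iff]; omega, by (try dsimp only); rw [Int.even_iff]; omega⟩⟩, ?_⟩
          apply Subtype.ext
          simp only [f, cond_true, cond_false, Prod.mk.injEq, and_true, true_and]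
          try dsimp only
          omega
        · rw [Int.odd_iff] at hp
          refine ⟨⟨(false, true), ⟨(b + c + 1, b - c, u), by (try dsimp only); linear_combination heq,
            by (try dsimp only); rw [Int.odd_iff]; omega, by (try dsimp only); rw [Int.even_iff]; omega⟩⟩, ?_⟩
          apply Subtype.ext
          simp only [f, cond_true, cond_false, Prod.mk.injEq, and_true, true_and]
          try dsimp only
          omega
  have h2 := Nat.card_congr (Equiv.ofBijective f hf)
  rw [Nat.card_prod, Nat.card_prod] at h2
  simp only [Nat.card_eq_fintype_card, Fintype.card_bool] at h2
  omega

lemma cardD1 (M N : ℤ) (hMN : M = 16 * N + 2) :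
    Nat.card {p : ℤ × ℤ × ℤ //
      2 * p.1 ^ 2 + 2 * p.2.1 ^ 2 + p.2.2 ^ 2 = M ∧ Odd p.1 ∧ Even p.2.1} =
    Nat.card {p : ℤ × ℤ × ℤ // 8 * p.1 ^ 2 + 16 * p.2.1 ^ 2 + p.2.2 ^ 2 = 8 * N + 1} := by
  subst hMN
  refine (Nat.card_congr (Equiv.ofBijective
    (fun q => ⟨(q.1.2.2, 4 * q.1.2.1, 4 * q.1.1), by
      obtain ⟨⟨l, m, s⟩, h⟩ := q
      dsimp only at h ⊢
      refine ⟨by linear_combination 2 * h, ?_, ⟨2 * m, by ring⟩⟩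
      rw [Int.odd_iff]
      have h1 := sq2 s; have h2 := sq2 l; have h3 := sq2 m
      set A := s ^ 2; set B := l ^ 2; set C := m ^ 2
      omega⟩) ⟨?_, ?_⟩)).symm
  · rintro ⟨⟨l, m, s⟩, h⟩ ⟨⟨l', m', s'⟩, h'⟩ hh
    simp only [Subtype.mk.injEq, Prod.mk.injEq] at hh ⊢
    omega
  · rintro ⟨⟨s, D, E⟩, hG, hs, hD⟩
    dsimp only at hG hs hD
    obtain ⟨k, hk⟩ := odd_sq8 hs
    obtain ⟨d, rfl⟩ := hD
    have hE : E % 2 = 0 := Geven hG (by omega)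
    obtain ⟨e, rfl⟩ : ∃ e, E = 2 * e := ⟨E / 2, by omega⟩
    have h1 : 8 * d ^ 2 + 4 * e ^ 2 = 16 * N - 16 * k := by linear_combination hG - 2 * hk
    have he : e % 2 = 0 := by
      have h2 := sq2 e; have h3 := sq2 d
      set A := e ^ 2; set B := d ^ 2
      omega
    obtain ⟨f, rfl⟩ : ∃ f, e = 2 * f := ⟨e / 2, by omega⟩
    have h1' : 8 * d ^ 2 + 16 * f ^ 2 = 16 * N - 16 * k := by linear_combination h1
    have hd : d % 2 = 0 := by
      have h2 := sq2 d; have h3 := sq2 f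
      set A := d ^ 2; set B := f ^ 2
      omega
    obtain ⟨g, rfl⟩ : ∃ g, d = 2 * g := ⟨d / 2, by omega⟩
    refine ⟨⟨(f, g, s), ?_⟩, ?_⟩
    · dsimp only
      have h2 : (2 : ℤ) * (8 * f ^ 2 + 16 * g ^ 2 + s ^ 2) = 2 * (8 * N + 1) := by
        linear_combination hG
      exact mul_left_cancel₀ two_ne_zero h2
    · apply Subtype.ext
      try dsimp only
      try simp only [Prod.mk.injEq, true_and, and_true]
      try omega

lemma cardD2 (M N : ℤ) (hMN : M = 16 * N + 6) :
    Nat.card {p : ℤ × ℤ × ℤ //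
      2 * p.1 ^ 2 + 2 * p.2.1 ^ 2 + p.2.2 ^ 2 = M ∧ Odd p.1 ∧ Even p.2.1} =
    Nat.card {p : ℤ × ℤ × ℤ // 16 * p.1 ^ 2 + p.2.1 ^ 2 + 2 * p.2.2 ^ 2 = 8 * N + 3} := by
  subst hMN
  refine (Nat.card_congr (Equiv.ofBijective
    (fun q => ⟨(q.1.2.1, 4 * q.1.1, 2 * q.1.2.2), by
      obtain ⟨⟨l, s, r⟩, h⟩ := q
      dsimp only at h ⊢
      refine ⟨by linear_combination 2 * h, ?_, ⟨2 * l, by ring⟩⟩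
      rw [Int.odd_iff]
      have h1 := sq2 s; have h2 := sq2 l; have h3 := sq2 r
      set A := s ^ 2; set B := l ^ 2; set C := r ^ 2
      omega⟩) ⟨?_, ?_⟩)).symm
  · rintro ⟨⟨l, s, r⟩, h⟩ ⟨⟨l', s', r'⟩, h'⟩ hh
    simp only [Subtype.mk.injEq, Prod.mk.injEq] at hh ⊢
    omega
  · rintro ⟨⟨s, D, E⟩, hG, hs, hD⟩
    dsimp only at hG hs hD
    obtain ⟨k, hk⟩ := odd_sq8 hs
    obtain ⟨d, rfl⟩ := hD
    have hE : E % 2 = 0 := Geven hG (by omega)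
    obtain ⟨e, rfl⟩ : ∃ e, E = 2 * e := ⟨E / 2, by omega⟩
    have h1 : 8 * d ^ 2 + 4 * e ^ 2 = 16 * N + 4 - 16 * k := by linear_combination hG - 2 * hk
    have he : e % 2 = 1 := by
      have h2 := sq2 e; have h3 := sq2 d
      set A := e ^ 2; set B := d ^ 2
      omega
    obtain ⟨j, hj⟩ := odd_sq8 (Int.odd_iff.mpr he)
    have hd : d % 2 = 0 := by
      have h2 := sq2 d
      rw [hj] at h1
      set B := d ^ 2
      omega
    obtain ⟨g, rfl⟩ : ∃ g, d = 2 * g := ⟨d / 2, by omega⟩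
    refine ⟨⟨(g, s, e), ?_⟩, ?_⟩
    · dsimp only
      have h2 : (2 : ℤ) * (16 * g ^ 2 + s ^ 2 + 2 * e ^ 2) = 2 * (8 * N + 3) := by
        linear_combination hG
      exact mul_left_cancel₀ two_ne_zero h2
    · apply Subtype.ext
      try dsimp only
      try simp only [Prod.mk.injEq, true_and, and_true]
      try omega

lemma cardD3 (M N : ℤ) (hMN : M = 16 * N + 10) :
    Nat.card {p : ℤ × ℤ × ℤ //
      2 * p.1 ^ 2 + 2 * p.2.1 ^ 2 + p.2.2 ^ 2 = M ∧ Odd p.1 ∧ Even p.2.1} =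
    Nat.card {p : ℤ × ℤ × ℤ // 8 * p.1 ^ 2 + p.2.1 ^ 2 + 4 * p.2.2 ^ 2 = 8 * N + 5} := by
  subst hMN
  refine (Nat.card_congr (Equiv.ofBijective
    (fun q => ⟨(q.1.2.1, 2 * q.1.2.2, 4 * q.1.1), by
      obtain ⟨⟨l, s, r⟩, h⟩ := q
      dsimp only at h ⊢
      refine ⟨by linear_combination 2 * h, ?_, ⟨r, by ring⟩⟩
      rw [Int.odd_iff]
      have h1 := sq2 s; have h2 := sq2 l; have h3 := sq2 r
      set A := s ^ 2; set B := l ^ 2; set C := r ^ 2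
      omega⟩) ⟨?_, ?_⟩)).symm
  · rintro ⟨⟨l, s, r⟩, h⟩ ⟨⟨l', s', r'⟩, h'⟩ hh
    simp only [Subtype.mk.injEq, Prod.mk.injEq] at hh ⊢
    omega
  · rintro ⟨⟨s, D, E⟩, hG, hs, hD⟩
    dsimp only at hG hs hD
    obtain ⟨k, hk⟩ := odd_sq8 hs
    obtain ⟨d, rfl⟩ := hD
    have hE : E % 2 = 0 := Geven hG (by omega)
    obtain ⟨e, rfl⟩ : ∃ e, E = 2 * e := ⟨E / 2, by omega⟩
    have h1 : 8 * d ^ 2 + 4 * e ^ 2 = 16 * N + 8 - 16 * k := by linear_combination hG - 2 * hk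
    have he : e % 2 = 0 := by
      have h2 := sq2 e; have h3 := sq2 d
      set A := e ^ 2; set B := d ^ 2
      omega
    obtain ⟨f, rfl⟩ : ∃ f, e = 2 * f := ⟨e / 2, by omega⟩
    refine ⟨⟨(f, s, d), ?_⟩, ?_⟩
    · dsimp only
      have h2 : (2 : ℤ) * (8 * f ^ 2 + s ^ 2 + 4 * d ^ 2) = 2 * (8 * N + 5) := by
        linear_combination hG
      exact mul_left_cancel₀ two_ne_zero h2
    · apply Subtype.ext
      try dsimp only
      try simp only [Prod.mk.injEq, true_and, and_true]
      try omega

lemma cardD4 (M N : ℤ) (hMN : M = 16 * N + 14) :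
    Nat.card {p : ℤ × ℤ × ℤ //
      2 * p.1 ^ 2 + 2 * p.2.1 ^ 2 + p.2.2 ^ 2 = M ∧ Odd p.1 ∧ Even p.2.1} =
    Nat.card {p : ℤ × ℤ × ℤ // p.1 ^ 2 + 2 * p.2.1 ^ 2 + 4 * p.2.2 ^ 2 = 8 * N + 7} := by
  subst hMN
  refine (Nat.card_congr (Equiv.ofBijective
    (fun q => ⟨(q.1.1, 2 * q.1.2.2, 2 * q.1.2.1), by
      obtain ⟨⟨s, r, w⟩, h⟩ := q
      dsimp only at h ⊢
      refine ⟨by linear_combination 2 * h, ?_, ⟨w, by ring⟩⟩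
      rw [Int.odd_iff]
      have h1 := sq2 s; have h2 := sq2 r; have h3 := sq2 w
      set A := s ^ 2; set B := r ^ 2; set C := w ^ 2
      omega⟩) ⟨?_, ?_⟩)).symm
  · rintro ⟨⟨s, r, w⟩, h⟩ ⟨⟨s', r', w'⟩, h'⟩ hh
    simp only [Subtype.mk.injEq, Prod.mk.injEq] at hh ⊢
    omega
  · rintro ⟨⟨s, D, E⟩, hG, hs, hD⟩
    dsimp only at hG hs hD
    obtain ⟨d, rfl⟩ := hD
    have hE : E % 2 = 0 := Geven hG (by omega)
    obtain ⟨e, rfl⟩ : ∃ e, E = 2 * e := ⟨E / 2, by omega⟩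
    refine ⟨⟨(s, e, d), ?_⟩, ?_⟩
    · dsimp only
      have h2 : (2 : ℤ) * (s ^ 2 + 2 * e ^ 2 + 4 * d ^ 2) = 2 * (8 * N + 7) := by
        linear_combination hG
      exact mul_left_cancel₀ two_ne_zero h2
    · apply Subtype.ext
      try dsimp only
      try simp only [Prod.mk.injEq, true_and, and_true]
      try omega

lemma cardD6 (M N : ℤ) (hMN : M = 4 * N + 2) :
    Nat.card {p : ℤ × ℤ × ℤ //
      2 * p.1 ^ 2 + 2 * p.2.1 ^ 2 + p.2.2 ^ 2 = M ∧ Odd p.1 ∧ Even p.2.1} =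
    Nat.card {p : ℤ × ℤ × ℤ // p.1 ^ 2 + 2 * p.2.1 ^ 2 + 4 * p.2.2 ^ 2 = 2 * N + 1} := by
  subst hMN
  refine (Nat.card_congr (Equiv.ofBijective
    (fun q => ⟨(q.1.1, 2 * q.1.2.2, 2 * q.1.2.1), by
      obtain ⟨⟨x, y, z⟩, h⟩ := q
      dsimp only at h ⊢
      refine ⟨by linear_combination 2 * h, ?_, ⟨z, by ring⟩⟩
      rw [Int.odd_iff]
      have h1 := sq2 x; have h2 := sq2 y; have h3 := sq2 z
      set A := x ^ 2; set B := y ^ 2; set C := z ^ 2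
      omega⟩) ⟨?_, ?_⟩)).symm
  · rintro ⟨⟨x, y, z⟩, h⟩ ⟨⟨x', y', z'⟩, h'⟩ hh
    simp only [Subtype.mk.injEq, Prod.mk.injEq] at hh ⊢
    omega
  · rintro ⟨⟨s, D, E⟩, hG, hs, hD⟩
    dsimp only at hG hs hD
    obtain ⟨d, rfl⟩ := hD
    have hE : E % 2 = 0 := Geven hG (by omega)
    obtain ⟨e, rfl⟩ : ∃ e, E = 2 * e := ⟨E / 2, by omega⟩
    refine ⟨⟨(s, e, d), ?_⟩, ?_⟩
    · dsimp only
      have h2 : (2 : ℤ) * (s ^ 2 + 2 * e ^ 2 + 4 * d ^ 2) = 2 * (2 * N + 1) := by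
        linear_combination hG
      exact mul_left_cancel₀ two_ne_zero h2
    · apply Subtype.ext
      try dsimp only
      try simp only [Prod.mk.injEq, true_and, and_true]
      try omega

lemma cardE1 (N : ℤ) :
    Nat.card {p : ℤ × ℤ × ℤ // 8 * p.1 ^ 2 + 16 * p.2.1 ^ 2 + p.2.2 ^ 2 = 8 * N + 1} =
    2 * Nat.card {x : ℤ × ℤ × ℕ // N = x.1 ^ 2 + 2 * x.2.1 ^ 2 + (tri x.2.2 : ℤ)} := by
  have e := Nat.card_congr (Equiv.ofBijective
    (fun (q : Bool × {x : ℤ × ℤ × ℕ // N = x.1 ^ 2 + 2 * x.2.1 ^ 2 + (tri x.2.2 : ℤ)}) =>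
      (⟨(q.2.1.1, q.2.1.2.1, eps q.1 q.2.1.2.2), by
        obtain ⟨b, ⟨⟨l, m, n⟩, h⟩⟩ := q
        dsimp only at h ⊢
        rw [eps_sq]
        linear_combination -8 * h⟩ :
        {p : ℤ × ℤ × ℤ // 8 * p.1 ^ 2 + 16 * p.2.1 ^ 2 + p.2.2 ^ 2 = 8 * N + 1})) ⟨?_, ?_⟩)
  · rw [Nat.card_prod] at e
    simp only [Nat.card_eq_fintype_card, Fintype.card_bool] at e
    omega
  · rintro ⟨b, ⟨⟨l, m, n⟩, h⟩⟩ ⟨b', ⟨⟨l', m', n'⟩, h'⟩⟩ hh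
    simp only [Subtype.mk.injEq, Prod.mk.injEq] at hh
    obtain ⟨h1, h2, h3⟩ := hh
    obtain ⟨rfl, rfl⟩ := eps_inj h3
    subst h1; subst h2
    rfl
  · rintro ⟨⟨x, y, s⟩, heq⟩
    dsimp only at heq
    have hs : s % 2 = 1 := by
      have h1 := sq2 s; have h2 := sq2 x; have h3 := sq2 y
      set A := s ^ 2; set B := x ^ 2; set C := y ^ 2
      omega
    obtain ⟨b, n, rfl⟩ := eps_surj (Int.odd_iff.mpr hs)
    have hmem : N = x ^ 2 + 2 * y ^ 2 + (tri n : ℤ) := by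
      rw [eps_sq] at heq
      have h8 : (8 : ℤ) * N = 8 * (x ^ 2 + 2 * y ^ 2 + (tri n : ℤ)) := by linear_combination -heq
      exact mul_left_cancel₀ (by norm_num : (8 : ℤ) ≠ 0) h8
    exact ⟨⟨b, ⟨(x, y, n), hmem⟩⟩, rfl⟩

lemma cardE2 (N : ℤ) :
    Nat.card {p : ℤ × ℤ × ℤ // 16 * p.1 ^ 2 + p.2.1 ^ 2 + 2 * p.2.2 ^ 2 = 8 * N + 3} =
    4 * Nat.card {x : ℤ × ℕ × ℕ //
      N = 2 * x.1 ^ 2 + (tri x.2.1 : ℤ) + 2 * (tri x.2.2 : ℤ)} := by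
  have e := Nat.card_congr (Equiv.ofBijective
    (fun (q : (Bool × Bool) × {x : ℤ × ℕ × ℕ //
        N = 2 * x.1 ^ 2 + (tri x.2.1 : ℤ) + 2 * (tri x.2.2 : ℤ)}) =>
      (⟨(q.2.1.1, eps q.1.1 q.2.1.2.1, eps q.1.2 q.2.1.2.2), by
        obtain ⟨⟨b1, b2⟩, ⟨⟨l, m, n⟩, h⟩⟩ := q
        dsimp only at h ⊢
        rw [eps_sq, eps_sq]
        linear_combination -8 * h⟩ :
        {p : ℤ × ℤ × ℤ // 16 * p.1 ^ 2 + p.2.1 ^ 2 + 2 * p.2.2 ^ 2 = 8 * N + 3})) ⟨?_, ?_⟩)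
  · rw [Nat.card_prod, Nat.card_prod] at e
    simp only [Nat.card_eq_fintype_card, Fintype.card_bool] at e
    omega
  · rintro ⟨⟨b1, b2⟩, ⟨⟨l, m, n⟩, h⟩⟩ ⟨⟨b1', b2'⟩, ⟨⟨l', m', n'⟩, h'⟩⟩ hh
    simp only [Subtype.mk.injEq, Prod.mk.injEq] at hh
    obtain ⟨h1, h2, h3⟩ := hh
    obtain ⟨rfl, rfl⟩ := eps_inj h2
    obtain ⟨rfl, rfl⟩ := eps_inj h3
    subst h1
    rfl
  · rintro ⟨⟨l, s, r⟩, heq⟩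
    dsimp only at heq
    have hs : s % 2 = 1 := by
      have h1 := sq2 s; have h2 := sq2 l; have h3 := sq2 r
      set A := s ^ 2; set B := l ^ 2; set C := r ^ 2
      omega
    obtain ⟨k, hk⟩ := odd_sq8 (Int.odd_iff.mpr hs)
    have hr : r % 2 = 1 := by
      have h1 := sq2 r; have h2 := sq2 l
      rw [hk] at heq
      set A := r ^ 2; set B := l ^ 2
      omega
    obtain ⟨b1, m, rfl⟩ := eps_surj (Int.odd_iff.mpr hs)
    obtain ⟨b2, n, rfl⟩ := eps_surj (Int.odd_iff.mpr hr)
    have hmem : N = 2 * l ^ 2 + (tri m : ℤ) + 2 * (tri n : ℤ) := by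
      rw [eps_sq, eps_sq] at heq
      have h8 : (8 : ℤ) * N = 8 * (2 * l ^ 2 + (tri m : ℤ) + 2 * (tri n : ℤ)) := by
        linear_combination -heq
      exact mul_left_cancel₀ (by norm_num : (8 : ℤ) ≠ 0) h8
    exact ⟨⟨(b1, b2), ⟨(l, m, n), hmem⟩⟩, rfl⟩

lemma cardE3 (N : ℤ) :
    Nat.card {p : ℤ × ℤ × ℤ // 8 * p.1 ^ 2 + p.2.1 ^ 2 + 4 * p.2.2 ^ 2 = 8 * N + 5} =
    4 * Nat.card {x : ℤ × ℕ × ℕ //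
      N = x.1 ^ 2 + (tri x.2.1 : ℤ) + 4 * (tri x.2.2 : ℤ)} := by
  have e := Nat.card_congr (Equiv.ofBijective
    (fun (q : (Bool × Bool) × {x : ℤ × ℕ × ℕ //
        N = x.1 ^ 2 + (tri x.2.1 : ℤ) + 4 * (tri x.2.2 : ℤ)}) =>
      (⟨(q.2.1.1, eps q.1.1 q.2.1.2.1, eps q.1.2 q.2.1.2.2), by
        obtain ⟨⟨b1, b2⟩, ⟨⟨l, m, n⟩, h⟩⟩ := q
        dsimp only at h ⊢
        rw [eps_sq, eps_sq]
        linear_combination -8 * h⟩ :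
        {p : ℤ × ℤ × ℤ // 8 * p.1 ^ 2 + p.2.1 ^ 2 + 4 * p.2.2 ^ 2 = 8 * N + 5})) ⟨?_, ?_⟩)
  · rw [Nat.card_prod, Nat.card_prod] at e
    simp only [Nat.card_eq_fintype_card, Fintype.card_bool] at e
    omega
  · rintro ⟨⟨b1, b2⟩, ⟨⟨l, m, n⟩, h⟩⟩ ⟨⟨b1', b2'⟩, ⟨⟨l', m', n'⟩, h'⟩⟩ hh
    simp only [Subtype.mk.injEq, Prod.mk.injEq] at hh
    obtain ⟨h1, h2, h3⟩ := hh
    obtain ⟨rfl, rfl⟩ := eps_inj h2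
    obtain ⟨rfl, rfl⟩ := eps_inj h3
    subst h1
    rfl
  · rintro ⟨⟨l, s, r⟩, heq⟩
    dsimp only at heq
    have hs : s % 2 = 1 := by
      have h1 := sq2 s; have h2 := sq2 l; have h3 := sq2 r
      set A := s ^ 2; set B := l ^ 2; set C := r ^ 2
      omega
    obtain ⟨k, hk⟩ := odd_sq8 (Int.odd_iff.mpr hs)
    have hr : r % 2 = 1 := by
      have h1 := sq2 r; have h2 := sq2 l
      rw [hk] at heq
      set A := r ^ 2; set B := l ^ 2
      omega
    obtain ⟨b1, m, rfl⟩ := eps_surj (Int.odd_iff.mpr hs)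
    obtain ⟨b2, n, rfl⟩ := eps_surj (Int.odd_iff.mpr hr)
    have hmem : N = l ^ 2 + (tri m : ℤ) + 4 * (tri n : ℤ) := by
      rw [eps_sq, eps_sq] at heq
      have h8 : (8 : ℤ) * N = 8 * (l ^ 2 + (tri m : ℤ) + 4 * (tri n : ℤ)) := by
        linear_combination -heq
      exact mul_left_cancel₀ (by norm_num : (8 : ℤ) ≠ 0) h8
    exact ⟨⟨(b1, b2), ⟨(l, m, n), hmem⟩⟩, rfl⟩

lemma cardE4 (N : ℤ) :
    Nat.card {p : ℤ × ℤ × ℤ // p.1 ^ 2 + 2 * p.2.1 ^ 2 + 4 * p.2.2 ^ 2 = 8 * N + 7} =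
    8 * Nat.card {x : ℕ × ℕ × ℕ //
      N = (tri x.1 : ℤ) + 2 * (tri x.2.1 : ℤ) + 4 * (tri x.2.2 : ℤ)} := by
  have e := Nat.card_congr (Equiv.ofBijective
    (fun (q : (Bool × Bool × Bool) × {x : ℕ × ℕ × ℕ //
        N = (tri x.1 : ℤ) + 2 * (tri x.2.1 : ℤ) + 4 * (tri x.2.2 : ℤ)}) =>
      (⟨(eps q.1.1 q.2.1.1, eps q.1.2.1 q.2.1.2.1, eps q.1.2.2 q.2.1.2.2), by
        obtain ⟨⟨b1, b2, b3⟩, ⟨⟨a, b, c⟩, h⟩⟩ := q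
        dsimp only at h ⊢
        rw [eps_sq, eps_sq, eps_sq]
        linear_combination -8 * h⟩ :
        {p : ℤ × ℤ × ℤ // p.1 ^ 2 + 2 * p.2.1 ^ 2 + 4 * p.2.2 ^ 2 = 8 * N + 7})) ⟨?_, ?_⟩)
  · rw [Nat.card_prod, Nat.card_prod, Nat.card_prod] at e
    simp only [Nat.card_eq_fintype_card, Fintype.card_bool] at e
    omega
  · rintro ⟨⟨b1, b2, b3⟩, ⟨⟨a, b, c⟩, h⟩⟩ ⟨⟨b1', b2', b3'⟩, ⟨⟨a', b', c'⟩, h'⟩⟩ hh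
    simp only [Subtype.mk.injEq, Prod.mk.injEq] at hh
    obtain ⟨h1, h2, h3⟩ := hh
    obtain ⟨rfl, rfl⟩ := eps_inj h1
    obtain ⟨rfl, rfl⟩ := eps_inj h2
    obtain ⟨rfl, rfl⟩ := eps_inj h3
    rfl
  · rintro ⟨⟨s, r, w⟩, heq⟩
    dsimp only at heq
    have hs : s % 2 = 1 := by
      have h1 := sq2 s; have h2 := sq2 r; have h3 := sq2 w
      set A := s ^ 2; set B := r ^ 2; set C := w ^ 2
      omega
    obtain ⟨k, hk⟩ := odd_sq8 (Int.odd_iff.mpr hs)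
    have hr : r % 2 = 1 := by
      have h1 := sq2 r; have h2 := sq2 w
      rw [hk] at heq
      set A := r ^ 2; set B := w ^ 2
      omega
    obtain ⟨j, hj⟩ := odd_sq8 (Int.odd_iff.mpr hr)
    have hw : w % 2 = 1 := by
      have h1 := sq2 w
      rw [hj] at heq
      set A := w ^ 2
      omega
    obtain ⟨b1, a, rfl⟩ := eps_surj (Int.odd_iff.mpr hs)
    obtain ⟨b2, b, rfl⟩ := eps_surj (Int.odd_iff.mpr hr)
    obtain ⟨b3, c, rfl⟩ := eps_surj (Int.odd_iff.mpr hw)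
    have hmem : N = (tri a : ℤ) + 2 * (tri b : ℤ) + 4 * (tri c : ℤ) := by
      rw [eps_sq, eps_sq, eps_sq] at heq
      have h8 : (8 : ℤ) * N = 8 * ((tri a : ℤ) + 2 * (tri b : ℤ) + 4 * (tri c : ℤ)) := by
        linear_combination -heq
      exact mul_left_cancel₀ (by norm_num : (8 : ℤ) ≠ 0) h8
    exact ⟨⟨(b1, b2, b3), ⟨(a, b, c), hmem⟩⟩, rfl⟩

lemma card5 (N : ℤ) :
    Nat.card {p : ℤ × ℤ × ℤ // p.1 ^ 2 + 2 * p.2.1 ^ 2 + 4 * p.2.2 ^ 2 = 2 * N} =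
    Nat.card {p : ℤ × ℤ × ℤ // p.1 ^ 2 + 2 * p.2.1 ^ 2 + 2 * p.2.2 ^ 2 = N} := by
  refine (Nat.card_congr (Equiv.ofBijective
    (fun q => ⟨(2 * q.1.2.1, q.1.1, q.1.2.2), by
      obtain ⟨⟨x, w, z⟩, h⟩ := q
      dsimp only at h ⊢
      linear_combination 2 * h⟩) ⟨?_, ?_⟩)).symm
  · rintro ⟨⟨x, w, z⟩, h⟩ ⟨⟨x', w', z'⟩, h'⟩ hh
    simp only [Subtype.mk.injEq, Prod.mk.injEq] at hh ⊢
    omega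
  · rintro ⟨⟨X, Y, Z⟩, heq⟩
    dsimp only at heq
    have hX : X % 2 = 0 := by
      have h1 := sq2 X; have h2 := sq2 Y; have h3 := sq2 Z
      set A := X ^ 2; set B := Y ^ 2; set C := Z ^ 2
      omega
    obtain ⟨w, rfl⟩ : ∃ w, X = 2 * w := ⟨X / 2, by omega⟩
    refine ⟨⟨(Y, w, Z), ?_⟩, ?_⟩
    · dsimp only
      have h2 : (2 : ℤ) * (Y ^ 2 + 2 * w ^ 2 + 2 * Z ^ 2) = 2 * N := by linear_combination heq
      exact mul_left_cancel₀ two_ne_zero h2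
    · apply Subtype.ext
      try dsimp only
      try simp only [Prod.mk.injEq, true_and, and_true]
      try omega

theorem stmt5 (N : ℕ) :
    TCount 1 1 2 (4 * N : ℤ) = RtCount 1 2 1 (N : ℤ) ∧
    TCount 1 1 2 (4 * N + 1 : ℤ) = 2 * rTCount 2 1 2 (N : ℤ) ∧
    TCount 1 1 2 (4 * N + 2 : ℤ) = 2 * rTCount 1 1 4 (N : ℤ) ∧
    TCount 1 1 2 (4 * N + 3 : ℤ) = 4 * TCount 1 2 4 (N : ℤ) ∧
    rCount 1 2 4 (2 * N : ℤ) = rCount 1 2 2 (N : ℤ) ∧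
    rCount 1 2 4 (2 * N + 1 : ℤ) = 2 * TCount 1 1 2 (N : ℤ) := by
  have TC : ∀ m : ℤ, TCount 1 1 2 m =
      Nat.card {x : ℕ × ℕ × ℕ // m = (tri x.1 : ℤ) + (tri x.2.1 : ℤ) + 2 * (tri x.2.2 : ℤ)} := by
    intro m
    rw [TCount, ← Nat.card_coe_set_eq]
    exact Nat.card_congr (Equiv.subtypeEquivRight fun x => by
      simp only [Set.mem_setOf_eq]
      push_cast
      constructor <;> intro h <;> linarith)
  have T124 : ∀ m : ℤ, TCount 1 2 4 m =
      Nat.card {x : ℕ × ℕ × ℕ //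
        m = (tri x.1 : ℤ) + 2 * (tri x.2.1 : ℤ) + 4 * (tri x.2.2 : ℤ)} := by
    intro m
    rw [TCount, ← Nat.card_coe_set_eq]
    exact Nat.card_congr (Equiv.subtypeEquivRight fun x => by
      simp only [Set.mem_setOf_eq]
      push_cast
      constructor <;> intro h <;> linarith)
  have Rt121 : ∀ m : ℤ, RtCount 1 2 1 m =
      Nat.card {x : ℤ × ℤ × ℕ // m = x.1 ^ 2 + 2 * x.2.1 ^ 2 + (tri x.2.2 : ℤ)} := by
    intro m
    rw [RtCount, ← Nat.card_coe_set_eq]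
    exact Nat.card_congr (Equiv.subtypeEquivRight fun x => by
      simp only [Set.mem_setOf_eq]
      push_cast
      constructor <;> intro h <;> linarith)
  have rT212 : ∀ m : ℤ, rTCount 2 1 2 m =
      Nat.card {x : ℤ × ℕ × ℕ //
        m = 2 * x.1 ^ 2 + (tri x.2.1 : ℤ) + 2 * (tri x.2.2 : ℤ)} := by
    intro m
    rw [rTCount, ← Nat.card_coe_set_eq]
    exact Nat.card_congr (Equiv.subtypeEquivRight fun x => by
      simp only [Set.mem_setOf_eq]
      push_cast
      constructor <;> intro h <;> linarith)
  have rT114 : ∀ m : ℤ, rTCount 1 1 4 m =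
      Nat.card {x : ℤ × ℕ × ℕ //
        m = x.1 ^ 2 + (tri x.2.1 : ℤ) + 4 * (tri x.2.2 : ℤ)} := by
    intro m
    rw [rTCount, ← Nat.card_coe_set_eq]
    exact Nat.card_congr (Equiv.subtypeEquivRight fun x => by
      simp only [Set.mem_setOf_eq]
      push_cast
      constructor <;> intro h <;> linarith)
  have R124 : ∀ m : ℤ, rCount 1 2 4 m =
      Nat.card {p : ℤ × ℤ × ℤ // p.1 ^ 2 + 2 * p.2.1 ^ 2 + 4 * p.2.2 ^ 2 = m} := by
    intro m
    rw [rCount, ← Nat.card_coe_set_eq]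
    exact Nat.card_congr (Equiv.subtypeEquivRight fun x => by
      simp only [Set.mem_setOf_eq]
      push_cast
      constructor <;> intro h <;> linarith)
  have R122 : ∀ m : ℤ, rCount 1 2 2 m =
      Nat.card {p : ℤ × ℤ × ℤ // p.1 ^ 2 + 2 * p.2.1 ^ 2 + 2 * p.2.2 ^ 2 = m} := by
    intro m
    rw [rCount, ← Nat.card_coe_set_eq]
    exact Nat.card_congr (Equiv.subtypeEquivRight fun x => by
      simp only [Set.mem_setOf_eq]
      push_cast
      constructor <;> intro h <;> linarith)
  refine ⟨?_, ?_, ?_, ?_, ?_, ?_⟩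
  · rw [TC, Rt121]
    have h1 := cardA (4 * (N : ℤ))
    have h2 := cardB (4 * (N : ℤ))
    have h3 := cardC (4 * (4 * (N : ℤ)) + 2) (by omega)
    have h4 := cardD1 (4 * (4 * (N : ℤ)) + 2) (N : ℤ) (by ring)
    have h5 := cardE1 (N : ℤ)
    omega
  · rw [TC, rT212]
    have h1 := cardA (4 * (N : ℤ) + 1)
    have h2 := cardB (4 * (N : ℤ) + 1)
    have h3 := cardC (4 * (4 * (N : ℤ) + 1) + 2) (by omega)
    have h4 := cardD2 (4 * (4 * (N : ℤ) + 1) + 2) (N : ℤ) (by ring)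
    have h5 := cardE2 (N : ℤ)
    omega
  · rw [TC, rT114]
    have h1 := cardA (4 * (N : ℤ) + 2)
    have h2 := cardB (4 * (N : ℤ) + 2)
    have h3 := cardC (4 * (4 * (N : ℤ) + 2) + 2) (by omega)
    have h4 := cardD3 (4 * (4 * (N : ℤ) + 2) + 2) (N : ℤ) (by ring)
    have h5 := cardE3 (N : ℤ)
    omega
  · rw [TC, T124]
    have h1 := cardA (4 * (N : ℤ) + 3)
    have h2 := cardB (4 * (N : ℤ) + 3)
    have h3 := cardC (4 * (4 * (N : ℤ) + 3) + 2) (by omega)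
    have h4 := cardD4 (4 * (4 * (N : ℤ) + 3) + 2) (N : ℤ) (by ring)
    have h5 := cardE4 (N : ℤ)
    omega
  · rw [R124, R122]
    exact card5 (N : ℤ)
  · rw [R124, TC]
    have h1 := cardA (N : ℤ)
    have h2 := cardB (N : ℤ)
    have h3 := cardC (4 * (N : ℤ) + 2) (by omega)
    have h4 := cardD6 (4 * (N : ℤ) + 2) (N : ℤ) (by ring)
    omega
end
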